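/- arXiv:quant-ph/0306144 — 7 statements merged into one kernel-verified Lean document; each statement's English description precedes it below -/
import Mathlib

section
/- Let N ≥ 1, let λ : (ZMod N) × (ZMod N) → ℂ, and let D be the associated diagonal-in-the-Φ-basis matrix, D (j,k) (j',k') = Σ_{α,β} λ(α,β)·Φ_{αβ}(j,k)·conj(Φ_{αβ}(j',k')) with Φ_{αβ}(j,k) = (1/√N)·(T^(α.val) * (Rᵀ)^(β.val)) j k. Then the operator-Schmidt number of D equals the number of points in the support of the discrete Fourier transform of λ: rank(D^R) = Fintype.card {x : (ZMod N) × (ZMod N) // λ̂ x ≠ 0}, where D^R is the realignment of D. -/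
open Matrix Complex

/-- The shift matrix `R` on `ℂ^(ZMod N)`: `R j k = 1` iff `j = k + 1`. -/
noncomputable def shiftM (N : ℕ) [NeZero N] : Matrix (ZMod N) (ZMod N) ℂ :=
  fun j k => if j = k + 1 then 1 else 0

/-- The twist matrix `T` on `ℂ^(ZMod N)`: diagonal with entries `exp(2πi j/N)`. -/
noncomputable def twistM (N : ℕ) [NeZero N] : Matrix (ZMod N) (ZMod N) ℂ :=
  fun j k => if j = k then Complex.exp (2 * Real.pi * Complex.I * j.val / N) else 0

/-- Entries of the maximally entangled vectors `Φ_{αβ}`. -/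
noncomputable def PhiV (N : ℕ) [NeZero N] (α β : ZMod N) (jk : ZMod N × ZMod N) : ℂ :=
  ((1 : ℂ) / Real.sqrt N) * (twistM N ^ α.val * (shiftM N)ᵀ ^ β.val) jk.1 jk.2

/-- The discrete Fourier transform of a function on `(ZMod N)²`. -/
noncomputable def dft2 (N : ℕ) [NeZero N] (lam : ZMod N × ZMod N → ℂ) :
    ZMod N × ZMod N → ℂ :=
  fun p => (1 / N : ℂ) * ∑ α : ZMod N, ∑ β : ZMod N,
    Complex.exp (2 * Real.pi * Complex.I * (α.val * p.1.val + β.val * p.2.val) / N) *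
      lam (α, β)

/-- The operator `D = Σ_{αβ} λ(α,β) |Φ_{αβ}⟩⟨Φ_{αβ}|`. -/
noncomputable def DMat (N : ℕ) [NeZero N] (lam : ZMod N × ZMod N → ℂ) :
    Matrix (ZMod N × ZMod N) (ZMod N × ZMod N) ℂ :=
  fun p q => ∑ α : ZMod N, ∑ β : ZMod N,
    lam (α, β) * PhiV N α β p * (starRingEnd ℂ) (PhiV N α β q)

/-- The realignment `M^R (i,k) (j,l) = M (i,j) (k,l)` of a bipartite matrix; its rank is the
operator-Schmidt number. -/
def realign {I J K L : Type*} (M : Matrix (I × J) (K × L) ℂ) : Matrix (I × K) (J × L) ℂ :=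
  fun p q => M (p.1, q.1) (p.2, q.2)

/-! ### Auxiliary machinery -/

set_option linter.unusedSectionVars false

/-- `ee N m = exp(2πi/N)^m` for `m : ℤ`. -/
noncomputable def ee (N : ℕ) (m : ℤ) : ℂ := Complex.exp (2 * Real.pi * Complex.I / N) ^ m

section aux

variable {N : ℕ} [NeZero N]

lemma hprim : IsPrimitiveRoot (Complex.exp (2 * Real.pi * Complex.I / N)) N :=
  Complex.isPrimitiveRoot_exp N (NeZero.ne N)

lemma ee_add (m n : ℤ) : ee N (m + n) = ee N m * ee N n :=
  zpow_add₀ (Complex.exp_ne_zero _) _ _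

lemma ee_eq_one_iff (m : ℤ) : ee N m = 1 ↔ (m : ZMod N) = 0 := by
  rw [ee, hprim.zpow_eq_one_iff_dvd, ZMod.intCast_zmod_eq_zero_iff_dvd]

lemma ee_congr {m n : ℤ} (h : (m : ZMod N) = (n : ZMod N)) : ee N m = ee N n := by
  have h1 : ee N (m - n) = 1 := by
    rw [ee_eq_one_iff]; push_cast; rw [h]; ring
  have := ee_add (N := N) (m - n) n
  rw [sub_add_cancel, h1, one_mul] at this; exact this

lemma ee_exp (m : ℕ) : Complex.exp (2 * Real.pi * Complex.I * m / N) = ee N m := by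
  rw [ee, zpow_natCast, ← Complex.exp_nat_mul]
  congr 1; ring

lemma conj_ee (m : ℤ) : (starRingEnd ℂ) (ee N m) = ee N (-m) := by
  rw [ee, ee, map_zpow₀, ← Complex.exp_conj]
  have h : (starRingEnd ℂ) (2 * Real.pi * Complex.I / N) = -(2 * Real.pi * Complex.I / N) := by
    simp only [map_div₀, _root_.map_mul, Complex.conj_I, Complex.conj_ofReal, map_ofNat,
      map_natCast]
    ring
  rw [h, Complex.exp_neg, _root_.inv_zpow, ← _root_.zpow_neg]

lemma sum_ee (m : ℤ) :
    ∑ x : ZMod N, ee N (x.val * m) = if (m : ZMod N) = 0 then (N : ℂ) else 0 := by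
  have hval : ∑ x : ZMod N, ee N (x.val * m) = ∑ i ∈ Finset.range N, (ee N m) ^ i := by
    refine Finset.sum_nbij' (fun x => x.val) (fun i => (i : ZMod N)) ?_ ?_ ?_ ?_ ?_
    · intro x _; exact Finset.mem_range.mpr (ZMod.val_lt x)
    · intro i _; exact Finset.mem_univ _
    · intro x _; exact ZMod.natCast_rightInverse x
    · intro i hi; exact ZMod.val_cast_of_lt (Finset.mem_range.mp hi)
    · intro x _
      rw [ee, ee, ← zpow_natCast, ← _root_.zpow_mul]; congr 1; push_cast; ring
  rw [hval]
  by_cases h : (m : ZMod N) = 0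
  · rw [if_pos h]
    have : ee N m = 1 := (ee_eq_one_iff m).mpr h
    simp [this]
  · rw [if_neg h]
    have h1 : ee N m ≠ 1 := fun hc => h ((ee_eq_one_iff m).mp hc)
    rw [geom_sum_eq h1 N]
    have : (ee N m) ^ N = 1 := by
      rw [ee, ← zpow_natCast, ← _root_.zpow_mul, mul_comm m (N : ℤ), _root_.zpow_mul,
        zpow_natCast]
      have h2 : Complex.exp (2 * Real.pi * Complex.I / N) ^ N = 1 := hprim.pow_eq_one
      rw [h2, _root_.one_zpow]
    rw [this, sub_self, zero_div]

lemma cast_val (x : ZMod N) : ((x.val : ℤ) : ZMod N) = x := by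
  push_cast
  exact ZMod.natCast_rightInverse x

lemma val_sub_cond (x y : ZMod N) : (((x.val : ℤ) - (y.val : ℤ) : ℤ) : ZMod N) = 0 ↔ x = y := by
  rw [Int.cast_sub, cast_val, cast_val, sub_eq_zero]

lemma shiftT_pow (b : ℕ) (j k : ZMod N) :
    ((shiftM N)ᵀ ^ b) j k = if k = j + (b : ZMod N) then 1 else 0 := by
  induction b generalizing j k with
  | zero => simp [Matrix.one_apply, eq_comm]
  | succ b ih =>
    rw [pow_succ, Matrix.mul_apply]
    simp only [ih, transpose_apply, shiftM, ite_mul, one_mul, zero_mul]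
    rw [Finset.sum_ite_eq' Finset.univ (j + (b : ZMod N)) (fun m => if k = m + 1 then 1 else 0)]
    simp only [Finset.mem_univ, if_true]
    push_cast
    rw [add_assoc]

lemma twist_pow (a : ℕ) (j k : ZMod N) :
    (twistM N ^ a) j k = if j = k then ee N (a * j.val) else 0 := by
  induction a generalizing j k with
  | zero => simp [Matrix.one_apply, ee]
  | succ a ih =>
    rw [pow_succ, Matrix.mul_apply]
    simp only [ih, twistM, mul_ite, mul_zero, mul_one, ite_mul, zero_mul]
    rw [Finset.sum_ite_eq' Finset.univ k
      (fun m => if j = m then ee N (a * j.val) * Complex.exp (2 * Real.pi * Complex.I * m.val / N) else 0)]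
    simp only [Finset.mem_univ, if_true]
    by_cases h : j = k
    · subst h
      rw [if_pos rfl, if_pos rfl, ee_exp, ← ee_add]
      congr 1; push_cast; ring
    · rw [if_neg h, if_neg h]

lemma phiV_eq (α β : ZMod N) (j k : ZMod N) :
    PhiV N α β (j, k)
      = (1 / (Real.sqrt N : ℂ)) * (if k = j + β then ee N (α.val * j.val) else 0) := by
  rw [PhiV, Matrix.mul_apply]
  congr 1
  calc ∑ m, (twistM N ^ α.val) j m * ((shiftM N)ᵀ ^ β.val) m k
      = ∑ m, if j = m then (if k = m + (β.val : ZMod N) then ee N (α.val * j.val) else 0) else 0 := by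
        refine Finset.sum_congr rfl fun m _ => ?_
        rw [twist_pow, shiftT_pow]
        by_cases h : j = m
        · subst h; simp [ite_mul]
        · simp [h]
    _ = if k = j + β then ee N (α.val * j.val) else 0 := by
        rw [Finset.sum_ite_eq Finset.univ j]
        simp [ZMod.natCast_val, ZMod.cast_id]

lemma phiV_conj (α β : ZMod N) (j k : ZMod N) :
    (starRingEnd ℂ) (PhiV N α β (j, k))
      = (1 / (Real.sqrt N : ℂ)) * (if k = j + β then ee N (-((α.val : ℤ) * j.val)) else 0) := by
  rw [phiV_eq, _root_.map_mul]
  congr 1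
  · rw [map_div₀, _root_.map_one, Complex.conj_ofReal]
  · rw [apply_ite (starRingEnd ℂ), map_zero, conj_ee]

end aux

/-- The left change-of-basis matrix. -/
noncomputable def FM (N : ℕ) [NeZero N] : Matrix (ZMod N × ZMod N) (ZMod N × ZMod N) ℂ :=
  fun p q => if p.1 - p.2 = q.1 then (N : ℂ)⁻¹ * ee N ((q.2.val : ℤ) * p.1.val) else 0

/-- The right change-of-basis matrix. -/
noncomputable def GM (N : ℕ) [NeZero N] : Matrix (ZMod N × ZMod N) (ZMod N × ZMod N) ℂ :=
  fun q r => if r.1 - r.2 = q.1 then ee N (-((q.2.val : ℤ) * r.1.val)) else 0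

section claims

variable {N : ℕ} [NeZero N]

lemma sub_cond (j j' d : ZMod N) : j - j' = d ↔ j' = j - d := by
  constructor
  · intro h; rw [← h, sub_sub_cancel]
  · intro h; rw [h, sub_sub_cancel]

lemma key_sum (j k : ZMod N) :
    ∑ a : ZMod N, (N : ℂ)⁻¹ * ee N ((a.val : ℤ) * j.val) * ee N (-((a.val : ℤ) * k.val))
      = if j = k then 1 else 0 := by
  have h1 : ∀ a : ZMod N,
      (N : ℂ)⁻¹ * ee N ((a.val : ℤ) * j.val) * ee N (-((a.val : ℤ) * k.val))
        = (N : ℂ)⁻¹ * ee N ((a.val : ℤ) * ((j.val : ℤ) - (k.val : ℤ))) := by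
    intro a
    rw [mul_assoc, ← ee_add]
    congr 2
    ring
  rw [Finset.sum_congr rfl fun a _ => h1 a, ← Finset.mul_sum, sum_ee]
  by_cases h : j = k
  · rw [if_pos ((val_sub_cond j k).mpr h), if_pos h,
      inv_mul_cancel₀ (Nat.cast_ne_zero.mpr (NeZero.ne N))]
  · rw [if_neg (fun hc => h ((val_sub_cond j k).mp hc)), if_neg h, mul_zero]

lemma FG : FM N * GM N = 1 := by
  ext ⟨j, j'⟩ ⟨k, k'⟩
  rw [Matrix.mul_apply, Fintype.sum_prod_type]
  calc ∑ d : ZMod N, ∑ a : ZMod N, FM N (j, j') (d, a) * GM N (d, a) (k, k')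
      = ∑ d : ZMod N, if j - j' = d then
          (if k - k' = d then (if j = k then 1 else 0) else 0) else 0 := by
        refine Finset.sum_congr rfl fun d _ => ?_
        by_cases h1 : j - j' = d
        · rw [if_pos h1]
          by_cases h2 : k - k' = d
          · rw [if_pos h2]
            calc ∑ a : ZMod N, FM N (j, j') (d, a) * GM N (d, a) (k, k')
                = ∑ a : ZMod N, (N : ℂ)⁻¹ * ee N ((a.val : ℤ) * j.val)
                    * ee N (-((a.val : ℤ) * k.val)) := by
                  refine Finset.sum_congr rfl fun a _ => ?_
                  simp only [FM, GM, if_pos h1, if_pos h2]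
              _ = if j = k then 1 else 0 := key_sum j k
          · rw [if_neg h2]
            refine Finset.sum_eq_zero fun a _ => ?_
            simp only [FM, GM, if_neg h2, mul_zero]
        · rw [if_neg h1]
          refine Finset.sum_eq_zero fun a _ => ?_
          simp only [FM, GM, if_neg h1, zero_mul]
    _ = (1 : Matrix (ZMod N × ZMod N) (ZMod N × ZMod N) ℂ) (j, j') (k, k') := by
        rw [Finset.sum_ite_eq Finset.univ (j - j')]
        simp only [Finset.mem_univ, if_true, Matrix.one_apply, Prod.mk.injEq]
        by_cases h1 : j = k
        · by_cases h2 : j' = k'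
          · simp [h1, h2]
          · have hc : ¬(k - k' = j - j') := fun hc => by
              rw [h1] at hc
              exact h2 (sub_right_inj.mp hc).symm
            simp [hc, h2]
        · simp [h1]

lemma key_sum2 (a a' : ZMod N) :
    ∑ j : ZMod N, ee N (-((a.val : ℤ) * j.val)) * ((N : ℂ)⁻¹ * ee N ((a'.val : ℤ) * j.val))
      = if a' = a then 1 else 0 := by
  have h1 : ∀ j : ZMod N,
      ee N (-((a.val : ℤ) * j.val)) * ((N : ℂ)⁻¹ * ee N ((a'.val : ℤ) * j.val))
        = (N : ℂ)⁻¹ * ee N ((j.val : ℤ) * ((a'.val : ℤ) - (a.val : ℤ))) := by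
    intro j
    rw [show ee N (-((a.val : ℤ) * j.val)) * ((N : ℂ)⁻¹ * ee N ((a'.val : ℤ) * j.val))
        = (N : ℂ)⁻¹ * (ee N (-((a.val : ℤ) * j.val)) * ee N ((a'.val : ℤ) * j.val)) by ring,
      ← ee_add]
    congr 2
    ring
  rw [Finset.sum_congr rfl fun j _ => h1 j, ← Finset.mul_sum, sum_ee]
  by_cases h : a' = a
  · rw [if_pos ((val_sub_cond a' a).mpr h), if_pos h,
      inv_mul_cancel₀ (Nat.cast_ne_zero.mpr (NeZero.ne N))]
  · rw [if_neg (fun hc => h ((val_sub_cond a' a).mp hc)), if_neg h, mul_zero]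

lemma GF : GM N * FM N = 1 := by
  ext ⟨d, a⟩ ⟨d', a'⟩
  rw [Matrix.mul_apply, Fintype.sum_prod_type]
  calc ∑ j : ZMod N, ∑ j' : ZMod N, GM N (d, a) (j, j') * FM N (j, j') (d', a')
      = ∑ j : ZMod N, (if d = d' then
          ee N (-((a.val : ℤ) * j.val)) * ((N : ℂ)⁻¹ * ee N ((a'.val : ℤ) * j.val)) else 0) := by
        refine Finset.sum_congr rfl fun j _ => ?_
        have hterm : ∀ j' : ZMod N, GM N (d, a) (j, j') * FM N (j, j') (d', a')
            = if j' = j - d then (if j - j' = d' then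
                ee N (-((a.val : ℤ) * j.val)) * ((N : ℂ)⁻¹ * ee N ((a'.val : ℤ) * j.val))
              else 0) else 0 := by
          intro j'
          simp only [GM, FM]
          by_cases h1 : j - j' = d
          · rw [if_pos h1, if_pos ((sub_cond j j' d).mp h1)]
            by_cases h2 : j - j' = d'
            · rw [if_pos h2, if_pos h2]
            · rw [if_neg h2, if_neg h2, mul_zero]
          · rw [if_neg h1, if_neg (fun hc => h1 ((sub_cond j j' d).mpr hc)), zero_mul]
        rw [Finset.sum_congr rfl fun j' _ => hterm j',
          Finset.sum_ite_eq' Finset.univ (j - d)]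
        simp only [Finset.mem_univ, if_true, sub_sub_cancel]
    _ = (1 : Matrix (ZMod N × ZMod N) (ZMod N × ZMod N) ℂ) (d, a) (d', a') := by
        by_cases hd : d = d'
        · simp only [if_pos hd, key_sum2 a a', Matrix.one_apply, Prod.mk.injEq]
          by_cases ha : a' = a
          · simp [hd, ha.symm]
          · rw [if_neg ha, if_neg (fun hc : d = d' ∧ a = a' => ha hc.2.symm)]
        · simp [hd, Matrix.one_apply, Prod.mk.injEq]

lemma add_cond (j k β : ZMod N) : (k = j + β) ↔ (β = k - j) := by
  constructor <;> intro h <;> linear_combination -h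

lemma cond_iff (j j' k k' : ZMod N) : (k' = j' + (k - j)) ↔ (j - j' = k - k') := by
  constructor <;> intro h <;> linear_combination h

lemma ee_merge (α j j' : ZMod N) :
    ee N ((α.val : ℤ) * j.val) * ee N (-((α.val : ℤ) * j'.val))
      = ee N ((α.val : ℤ) * ((j - j').val : ℤ)) := by
  rw [← ee_add]
  apply ee_congr
  push_cast [ZMod.natCast_val, ZMod.cast_id]
  ring

lemma hsq : (1 / (Real.sqrt N : ℂ)) * (1 / (Real.sqrt N : ℂ)) = (N : ℂ)⁻¹ := by
  rw [div_mul_div_comm, one_mul, ← Complex.ofReal_mul, Real.mul_self_sqrt (Nat.cast_nonneg N)]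
  push_cast
  rw [one_div]

lemma C1 (lam : ZMod N × ZMod N → ℂ) (j j' k k' : ZMod N) :
    realign (DMat N lam) (j, j') (k, k')
      = if j - j' = k - k' then
          (N : ℂ)⁻¹ * ∑ α : ZMod N, ee N ((α.val : ℤ) * ((j - j').val : ℤ)) * lam (α, k - j)
        else 0 := by
  show DMat N lam (j, k) (j', k') = _
  rw [DMat]
  have hterm : ∀ α β : ZMod N,
      lam (α, β) * PhiV N α β (j, k) * (starRingEnd ℂ) (PhiV N α β (j', k'))
        = if β = k - j then
            (if j - j' = k - k' then
              (N : ℂ)⁻¹ * (ee N ((α.val : ℤ) * ((j - j').val : ℤ)) * lam (α, k - j))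
            else 0)
          else 0 := by
    intro α β
    rw [phiV_eq, phiV_conj]
    by_cases hb : β = k - j
    · subst hb
      rw [if_pos rfl, if_pos (show k = j + (k - j) by ring)]
      by_cases hC : j - j' = k - k'
      · rw [if_pos ((cond_iff j j' k k').mpr hC), if_pos hC]
        have hE := ee_merge (N := N) α j j'
        calc lam (α, k - j) * (1 / (Real.sqrt N : ℂ) * ee N ((α.val : ℤ) * j.val)) *
              (1 / (Real.sqrt N : ℂ) * ee N (-((α.val : ℤ) * j'.val)))
            = (1 / (Real.sqrt N : ℂ) * (1 / (Real.sqrt N : ℂ))) *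
              (ee N ((α.val : ℤ) * j.val) * ee N (-((α.val : ℤ) * j'.val)) * lam (α, k - j)) := by
              ring
          _ = (N : ℂ)⁻¹ * (ee N ((α.val : ℤ) * ((j - j').val : ℤ)) * lam (α, k - j)) := by
              rw [hsq, hE]
      · rw [if_neg (fun hc => hC ((cond_iff j j' k k').mp hc)), if_neg hC, mul_zero, mul_zero]
    · rw [if_neg (fun hc => hb ((add_cond j k β).mp hc)), if_neg hb]
      simp
  rw [Finset.sum_congr rfl fun α _ => Finset.sum_congr rfl fun β _ => hterm α β]
  rw [Finset.sum_congr rfl fun α (_ : α ∈ Finset.univ) =>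
    Finset.sum_ite_eq' Finset.univ (k - j) (fun β => if j - j' = k - k' then
      (N : ℂ)⁻¹ * (ee N ((α.val : ℤ) * ((j - j').val : ℤ)) * lam (α, k - j)) else 0)]
  simp only [Finset.mem_univ, if_true]
  by_cases hC : j - j' = k - k'
  · simp only [if_pos hC, ← Finset.mul_sum]
  · simp only [if_neg hC, Finset.sum_const_zero]

lemma dft2_eq (lam : ZMod N × ZMod N → ℂ) (p : ZMod N × ZMod N) :
    dft2 N lam p = (N : ℂ)⁻¹ * ∑ α : ZMod N, ∑ β : ZMod N,
      ee N ((α.val : ℤ) * p.1.val + (β.val : ℤ) * p.2.val) * lam (α, β) := by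
  rw [dft2, one_div]
  congr 1
  refine Finset.sum_congr rfl fun α _ => Finset.sum_congr rfl fun β _ => ?_
  congr 1
  rw [show (2 * (Real.pi : ℂ) * Complex.I * ((α.val : ℂ) * p.1.val + (β.val : ℂ) * p.2.val) / N)
      = 2 * Real.pi * Complex.I * ((α.val * p.1.val + β.val * p.2.val : ℕ) : ℂ) / N by
    push_cast; ring]
  rw [ee_exp]
  apply ee_congr
  push_cast
  ring_nf

lemma cond_beta (j k β : ZMod N) :
    ((((j.val : ℤ) - (k.val : ℤ) + (β.val : ℤ)) : ℤ) : ZMod N) = 0 ↔ β = k - j := by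
  have hc : ((((j.val : ℤ) - (k.val : ℤ) + (β.val : ℤ)) : ℤ) : ZMod N) = j - k + β := by
    push_cast [ZMod.natCast_val, ZMod.cast_id]
    ring
  rw [hc]
  constructor <;> intro h <;> linear_combination h

lemma key3 (lam : ZMod N × ZMod N → ℂ) (d j k : ZMod N) :
    ∑ a : ZMod N, ((N : ℂ)⁻¹ * ee N ((a.val : ℤ) * j.val)) * dft2 N lam (d, a)
        * ee N (-((a.val : ℤ) * k.val))
      = (N : ℂ)⁻¹ * ∑ α : ZMod N, ee N ((α.val : ℤ) * (d.val : ℤ)) * lam (α, k - j) := by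
  have hNc : (N : ℂ) ≠ 0 := Nat.cast_ne_zero.mpr (NeZero.ne N)
  have step1 : ∀ a : ZMod N,
      ((N : ℂ)⁻¹ * ee N ((a.val : ℤ) * j.val)) * dft2 N lam (d, a)
          * ee N (-((a.val : ℤ) * k.val))
        = ∑ α : ZMod N, ∑ β : ZMod N,
            ((N : ℂ)⁻¹ * (N : ℂ)⁻¹ * lam (α, β) * ee N ((α.val : ℤ) * (d.val : ℤ)))
              * ee N ((a.val : ℤ) * ((j.val : ℤ) - (k.val : ℤ) + (β.val : ℤ))) := by
    intro a
    rw [dft2_eq]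
    rw [show ((N : ℂ)⁻¹ * ee N ((a.val : ℤ) * j.val)) *
          ((N : ℂ)⁻¹ * ∑ α : ZMod N, ∑ β : ZMod N,
            ee N ((α.val : ℤ) * (d.val : ℤ) + (β.val : ℤ) * (a.val : ℤ)) * lam (α, β))
          * ee N (-((a.val : ℤ) * k.val))
        = ((N : ℂ)⁻¹ * (N : ℂ)⁻¹ * (ee N ((a.val : ℤ) * j.val) * ee N (-((a.val : ℤ) * k.val)))) *
          ∑ α : ZMod N, ∑ β : ZMod N,
            ee N ((α.val : ℤ) * (d.val : ℤ) + (β.val : ℤ) * (a.val : ℤ)) * lam (α, β) by ring]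
    rw [Finset.mul_sum]
    refine Finset.sum_congr rfl fun α _ => ?_
    rw [Finset.mul_sum]
    refine Finset.sum_congr rfl fun β _ => ?_
    have h1 : ee N ((a.val : ℤ) * ((j.val : ℤ) - (k.val : ℤ) + (β.val : ℤ)))
        = ee N ((a.val : ℤ) * j.val) * ee N (-((a.val : ℤ) * k.val))
          * ee N ((β.val : ℤ) * (a.val : ℤ)) := by
      rw [← ee_add, ← ee_add]
      congr 1
      ring
    have h2 : ee N ((α.val : ℤ) * (d.val : ℤ) + (β.val : ℤ) * (a.val : ℤ))
        = ee N ((α.val : ℤ) * (d.val : ℤ)) * ee N ((β.val : ℤ) * (a.val : ℤ)) := ee_add _ _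
    rw [h1, h2]
    ring
  rw [Finset.sum_congr rfl fun a _ => step1 a, Finset.sum_comm, Finset.mul_sum]
  refine Finset.sum_congr rfl fun α _ => ?_
  rw [Finset.sum_comm]
  calc ∑ β : ZMod N, ∑ a : ZMod N,
        ((N : ℂ)⁻¹ * (N : ℂ)⁻¹ * lam (α, β) * ee N ((α.val : ℤ) * (d.val : ℤ)))
          * ee N ((a.val : ℤ) * ((j.val : ℤ) - (k.val : ℤ) + (β.val : ℤ)))
      = ∑ β : ZMod N, (if β = k - j then
          ((N : ℂ)⁻¹ * (N : ℂ)⁻¹ * lam (α, β) * ee N ((α.val : ℤ) * (d.val : ℤ))) * N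
        else 0) := by
        refine Finset.sum_congr rfl fun β _ => ?_
        rw [← Finset.mul_sum, sum_ee]
        by_cases hb : β = k - j
        · rw [if_pos ((cond_beta j k β).mpr hb), if_pos hb]
        · rw [if_neg (fun hc => hb ((cond_beta j k β).mp hc)), if_neg hb, mul_zero]
    _ = ((N : ℂ)⁻¹ * (N : ℂ)⁻¹ * lam (α, k - j) * ee N ((α.val : ℤ) * (d.val : ℤ))) * N := by
        rw [Finset.sum_ite_eq' Finset.univ (k - j)]
        simp only [Finset.mem_univ, if_true]
    _ = (N : ℂ)⁻¹ * (ee N ((α.val : ℤ) * (d.val : ℤ)) * lam (α, k - j)) := by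
        field_simp

lemma C2 (lam : ZMod N × ZMod N → ℂ) (j j' k k' : ZMod N) :
    (FM N * Matrix.diagonal (dft2 N lam) * GM N) (j, j') (k, k')
      = if j - j' = k - k' then
          (N : ℂ)⁻¹ * ∑ α : ZMod N, ee N ((α.val : ℤ) * ((j - j').val : ℤ)) * lam (α, k - j)
        else 0 := by
  rw [Matrix.mul_apply, Fintype.sum_prod_type]
  calc ∑ d : ZMod N, ∑ a : ZMod N,
        (FM N * Matrix.diagonal (dft2 N lam)) (j, j') (d, a) * GM N (d, a) (k, k')
      = ∑ d : ZMod N, (if j - j' = d then (if k - k' = d then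
          ∑ a : ZMod N, ((N : ℂ)⁻¹ * ee N ((a.val : ℤ) * j.val)) * dft2 N lam (d, a)
            * ee N (-((a.val : ℤ) * k.val)) else 0) else 0) := by
        refine Finset.sum_congr rfl fun d _ => ?_
        by_cases h1 : j - j' = d
        · by_cases h2 : k - k' = d
          · rw [if_pos h1, if_pos h2]
            refine Finset.sum_congr rfl fun a _ => ?_
            rw [Matrix.mul_diagonal]
            simp only [FM, GM, if_pos h1, if_pos h2]
          · rw [if_pos h1, if_neg h2]
            refine Finset.sum_eq_zero fun a _ => ?_
            simp only [GM, if_neg h2, mul_zero]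
        · rw [if_neg h1]
          refine Finset.sum_eq_zero fun a _ => ?_
          rw [Matrix.mul_diagonal]
          simp only [FM, if_neg h1, zero_mul, mul_zero]
    _ = if k - k' = j - j' then
          ∑ a : ZMod N, ((N : ℂ)⁻¹ * ee N ((a.val : ℤ) * j.val)) * dft2 N lam (j - j', a)
            * ee N (-((a.val : ℤ) * k.val)) else 0 := by
        rw [Finset.sum_ite_eq Finset.univ (j - j')]
        simp only [Finset.mem_univ, if_true]
    _ = if j - j' = k - k' then
          (N : ℂ)⁻¹ * ∑ α : ZMod N, ee N ((α.val : ℤ) * ((j - j').val : ℤ)) * lam (α, k - j)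
        else 0 := by
        by_cases hC : j - j' = k - k'
        · rw [if_pos hC.symm, if_pos hC, key3]
        · rw [if_neg (fun hc => hC hc.symm), if_neg hC]

lemma decomp (lam : ZMod N × ZMod N → ℂ) :
    realign (DMat N lam) = FM N * Matrix.diagonal (dft2 N lam) * GM N := by
  ext ⟨j, j'⟩ ⟨k, k'⟩
  rw [C1, C2]

end claims

/-- The operator-Schmidt number of `D` equals the cardinality of the support of `λ̂`. -/
theorem stmt_3 (N : ℕ) [NeZero N] (hN : 1 ≤ N) (lam : ZMod N × ZMod N → ℂ) :
    (realign (DMat N lam)).rank = Fintype.card {x : ZMod N × ZMod N // dft2 N lam x ≠ 0} := by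
  classical
  rw [decomp lam]
  have hF : IsUnit (FM N).det := Matrix.isUnit_det_of_right_inverse FG
  have hG : IsUnit (GM N).det := Matrix.isUnit_det_of_left_inverse FG
  rw [Matrix.mul_assoc, Matrix.rank_mul_eq_right_of_isUnit_det _ _ hF,
    Matrix.rank_mul_eq_left_of_isUnit_det _ _ hG, Matrix.rank_diagonal]
end

section
/- Let N ≥ 1, let λ : (ZMod N) × (ZMod N) → ℂ, and let D be the matrix D (j,k) (j',k') = Σ_{α,β} λ(α,β)·Φ_{αβ}(j,k)·conj(Φ_{αβ}(j',k')) with Φ_{αβ}(j,k) = (1/√N)·(T^(α.val) * (Rᵀ)^(β.val)) j k. Then D is unitary (Dᴴ * D = 1) if and only if λ is unimodular, i.e. ‖λ x‖ = 1 for every x ∈ (ZMod N) × (ZMod N). -/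
open Matrix Complex

/-!
The vectors `Φ_{αβ}` form an orthonormal basis of `ℂ^(ZMod N × ZMod N)`: with `ψ` the standard
additive character of `ZMod N`, `Φ_{αβ}(j, k) = [k = j + β] ψ(α j) / √N`, so orthogonality comes
down to `∑ j, ψ(c j) = N [c = 0]`. Hence `D = U diag(λ) Uᴴ` with `U` unitary, and `D` is unitary
iff `diag(λ)` is, i.e. iff every `λ(α, β)` has modulus one.
-/

theorem Unitary.mul_mul_star_mem_iff {R : Type*} [Monoid R] [StarMul R] {u a : R}
    (hu : u ∈ unitary R) : u * a * star u ∈ unitary R ↔ a ∈ unitary R := by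
  refine ⟨fun h => ?_, fun ha => mul_mem (mul_mem hu ha) (Unitary.star_mem hu)⟩
  have hconj : a = star u * (u * a * star u) * u := by
    simp only [← mul_assoc, Unitary.star_mul_self_of_mem hu, one_mul]
    rw [mul_assoc, Unitary.star_mul_self_of_mem hu, mul_one]
  rw [hconj]
  exact mul_mem (mul_mem (Unitary.star_mem hu) h) hu

theorem Matrix.diagonal_mem_unitaryGroup_iff {n α : Type*} [Fintype n] [DecidableEq n]
    [CommRing α] [StarRing α] {d : n → α} :
    diagonal d ∈ unitaryGroup n α ↔ ∀ i, d i ∈ unitary α := by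
  rw [mem_unitaryGroup_iff', star_eq_conjTranspose, diagonal_conjTranspose, diagonal_mul_diagonal,
    ← diagonal_one, diagonal_injective.eq_iff, funext_iff]
  simp only [Pi.star_apply, Unitary.mem_iff_star_mul_self]

theorem RCLike.mem_unitary_iff_norm_eq_one {𝕜 : Type*} [RCLike 𝕜] {z : 𝕜} :
    z ∈ unitary 𝕜 ↔ ‖z‖ = 1 := by
  rw [Unitary.mem_iff_star_mul_self, RCLike.star_def, RCLike.conj_mul]
  norm_cast
  exact pow_eq_one_iff_of_nonneg (norm_nonneg z) two_ne_zero

section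

open ZMod

theorem twistM_pow (N : ℕ) [NeZero N] (a : ℕ) :
    twistM N ^ a = diagonal fun j => stdAddChar ((a : ZMod N) * j) := by
  have htwist : twistM N = diagonal fun j => stdAddChar j := by
    ext j k
    simp only [twistM, diagonal_apply, stdAddChar_apply, toCircle_apply]
  rw [htwist, diagonal_pow]
  congr with j
  rw [Pi.pow_apply, ← AddChar.map_nsmul_eq_pow, nsmul_eq_mul]

theorem shiftM_transpose_pow_apply (N : ℕ) [NeZero N] (b : ℕ) (j k : ZMod N) :
    ((shiftM N)ᵀ ^ b) j k = if k = j + b then 1 else 0 := by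
  induction b generalizing k with
  | zero => simp [one_apply, eq_comm]
  | succ b ih =>
    simp only [pow_succ, mul_apply, ih, transpose_apply, shiftM, ite_mul, one_mul, zero_mul,
      Finset.sum_ite_eq', Finset.mem_univ, if_true, Nat.cast_succ, add_assoc]

theorem PhiV_apply (N : ℕ) [NeZero N] (α β j k : ZMod N) :
    PhiV N α β (j, k) = if k = j + β then stdAddChar (α * j) / Real.sqrt N else 0 := by
  simp only [PhiV, twistM_pow, natCast_zmod_val, diagonal_mul, shiftM_transpose_pow_apply]
  split_ifs <;> simp [div_eq_inv_mul]

theorem star_stdAddChar_div_mul (N : ℕ) [NeZero N] (a b : ZMod N) :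
    star (stdAddChar a / Real.sqrt N) * (stdAddChar b / Real.sqrt N) = stdAddChar (b - a) / N := by
  have hN : ((Real.sqrt N : ℝ) : ℂ) * (Real.sqrt N : ℝ) = N := by
    rw [← Complex.ofReal_mul, Real.mul_self_sqrt (Nat.cast_nonneg N), Complex.ofReal_natCast]
  rw [star_div₀, Complex.star_def, Complex.conj_ofReal, ← AddChar.map_neg_eq_conj, sub_eq_neg_add,
    AddChar.map_add_eq_mul, div_mul_div_comm, hN]

theorem sum_star_PhiV_mul_PhiV (N : ℕ) [NeZero N] (x y : ZMod N × ZMod N) :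
    ∑ p, star (PhiV N x.1 x.2 p) * PhiV N y.1 y.2 p = if x = y then 1 else 0 := by
  simp only [Fintype.sum_prod_type, PhiV_apply, apply_ite star, star_zero, ite_mul, mul_ite,
    zero_mul, mul_zero, star_stdAddChar_div_mul]
  simp only [Finset.sum_ite_eq', Finset.mem_univ, if_true, add_right_inj, ← sub_mul,
    mul_comm (y.1 - x.1), Finset.sum_ite_irrel, Finset.sum_const_zero, ← Finset.sum_div,
    AddChar.sum_mulShift _ (isPrimitive_stdAddChar N), card]
  have hN : (N : ℂ) ≠ 0 := Nat.cast_ne_zero.mpr (NeZero.ne N)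
  simp only [Prod.ext_iff, sub_eq_zero, eq_comm (a := y.1), eq_comm (a := y.2)]
  split_ifs <;> simp_all

noncomputable def phiMat (N : ℕ) [NeZero N] : Matrix (ZMod N × ZMod N) (ZMod N × ZMod N) ℂ :=
  of fun p x => PhiV N x.1 x.2 p

theorem phiMat_mem_unitaryGroup (N : ℕ) [NeZero N] : phiMat N ∈ unitaryGroup _ ℂ := by
  rw [mem_unitaryGroup_iff']
  ext x y
  simp only [mul_apply, star_apply, phiMat, of_apply, one_apply, sum_star_PhiV_mul_PhiV]

theorem DMat_eq_phiMat_mul_diagonal_mul_star (N : ℕ) [NeZero N] (lam : ZMod N × ZMod N → ℂ) :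
    DMat N lam = phiMat N * diagonal lam * star (phiMat N) := by
  ext p q
  rw [mul_apply, Fintype.sum_prod_type]
  simp only [DMat, mul_diagonal, star_apply, phiMat, of_apply, Complex.star_def, mul_comm (lam _)]

end

theorem stmt_4_general (N : ℕ) [NeZero N] (lam : ZMod N × ZMod N → ℂ) :
    (DMat N lam)ᴴ * DMat N lam = 1 ↔ ∀ x : ZMod N × ZMod N, ‖lam x‖ = 1 := by
  rw [← star_eq_conjTranspose, ← mem_unitaryGroup_iff', DMat_eq_phiMat_mul_diagonal_mul_star,
    Unitary.mul_mul_star_mem_iff (phiMat_mem_unitaryGroup N), diagonal_mem_unitaryGroup_iff]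
  simp only [RCLike.mem_unitary_iff_norm_eq_one]

/-- `D` is unitary iff `λ` is unimodular. -/
theorem stmt_4 (N : ℕ) [NeZero N] (hN : 1 ≤ N) (lam : ZMod N × ZMod N → ℂ) :
    (DMat N lam)ᴴ * DMat N lam = 1 ↔ ∀ x : ZMod N × ZMod N, ‖lam x‖ = 1 :=
  stmt_4_general N lam
end

section
/- For every S ∈ {1, 2, 3, 4, 5, 6, 7, 8, 9} there exists a unitary matrix U : Matrix (Fin 3 × Fin 3) (Fin 3 × Fin 3) ℂ (i.e. Uᴴ * U = 1) whose operator-Schmidt number is S, i.e. the rank of the realignment U^R equals S. -/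
open Matrix

namespace Stmt9Aux

def toF9 : Fin 3 × Fin 3 → Fin 9 := fun p => ⟨p.1.val * 3 + p.2.val, by omega⟩

def liftU (D : Matrix (Fin 9) (Fin 9) ℤ) : Matrix (Fin 3 × Fin 3) (Fin 3 × Fin 3) ℤ :=
  fun p q => D (toF9 p) (toF9 q)

def realignQ (M : Matrix (Fin 3 × Fin 3) (Fin 3 × Fin 3) ℤ) :
    Matrix (Fin 3 × Fin 3) (Fin 3 × Fin 3) ℤ :=
  fun p q => M (p.1, q.1) (p.2, q.2)

def liftL {S : ℕ} (D : Matrix (Fin S) (Fin 9) ℤ) : Matrix (Fin S) (Fin 3 × Fin 3) ℤ :=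
  fun s q => D s (toF9 q)

def liftR {S : ℕ} (D : Matrix (Fin 9) (Fin S) ℤ) : Matrix (Fin 3 × Fin 3) (Fin S) ℤ :=
  fun p s => D (toF9 p) s

noncomputable def g : ℤ →+* ℂ := Int.castRingHom ℂ

lemma mapz {n' m' : Type*} (z : ℤ) (M : Matrix n' m' ℤ) :
    (z • M).map g = (z : ℂ) • M.map g := by
  ext i j
  simp [Matrix.map_apply, Matrix.smul_apply, g, smul_eq_mul]

lemma map_conjTranspose (M : Matrix (Fin 3 × Fin 3) (Fin 3 × Fin 3) ℤ) :
    (M.map g)ᴴ = Mᵀ.map g := by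
  ext p q
  simp only [conjTranspose_apply, Matrix.map_apply, transpose_apply, g, Int.coe_castRingHom]
  exact map_intCast (starRingEnd ℂ) _

lemma rank_smul_eq {n' m' : Type*} [Fintype n'] [Fintype m'] [DecidableEq n']
    (a : ℂ) (ha : a ≠ 0) (M : Matrix n' m' ℂ) : (a • M).rank = M.rank := by
  refine le_antisymm ?_ ?_
  · have h : a • M = (a • (1 : Matrix n' n' ℂ)) * M := by
      rw [Matrix.smul_mul, Matrix.one_mul]
    rw [h]; exact Matrix.rank_mul_le_right _ _
  · have h : M = (a⁻¹ • (1 : Matrix n' n' ℂ)) * (a • M) := by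
      rw [Matrix.smul_mul, Matrix.one_mul, smul_smul, inv_mul_cancel₀ ha, one_smul]
    conv_lhs => rw [h]
    exact Matrix.rank_mul_le_right _ _

lemma main {S : ℕ} (m d : ℤ) (hm : (m : ℂ) ≠ 0) (hd : (d : ℂ) ≠ 0)
    (W : Matrix (Fin 9) (Fin 9) ℤ)
    (A : Matrix (Fin 9) (Fin S) ℤ) (B : Matrix (Fin S) (Fin 9) ℤ)
    (X : Matrix (Fin S) (Fin 9) ℤ) (Y : Matrix (Fin 9) (Fin S) ℤ)
    (hU : (liftU W)ᵀ * liftU W = (m * m) • 1)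
    (hAB : liftR A * liftL B = d • realignQ (liftU W))
    (hXY : liftL X * realignQ (liftU W) * liftR Y = d • 1) :
    ∃ V : Matrix (Fin 3 × Fin 3) (Fin 3 × Fin 3) ℂ,
      Vᴴ * V = 1 ∧ (realign V).rank = S := by
  set Wc : Matrix (Fin 3 × Fin 3) (Fin 3 × Fin 3) ℂ := (liftU W).map g with hWc
  refine ⟨(m : ℂ)⁻¹ • Wc, ?_, ?_⟩
  · have h1 : Wcᴴ * Wc = ((m : ℂ) * (m : ℂ)) • 1 := by
      rw [hWc, map_conjTranspose, ← Matrix.map_mul, hU, mapz,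
        Matrix.map_one _ g.map_zero g.map_one]
      push_cast
      ring_nf
    rw [conjTranspose_smul, Matrix.smul_mul, Matrix.mul_smul, h1, smul_smul, smul_smul]
    have : star (m : ℂ)⁻¹ * (m : ℂ)⁻¹ * ((m : ℂ) * (m : ℂ)) = 1 := by
      have hs : star (m : ℂ) = (m : ℂ) := map_intCast (starRingEnd ℂ) m
      rw [star_inv₀, hs]
      field_simp
    rw [this, one_smul]
  · set Rc : Matrix (Fin 3 × Fin 3) (Fin 3 × Fin 3) ℂ := (realignQ (liftU W)).map g with hRc
    have hre : realign ((m : ℂ)⁻¹ • Wc) = (m : ℂ)⁻¹ • Rc := rfl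
    rw [hre, rank_smul_eq _ (inv_ne_zero hm)]
    have hABc : (liftR A).map g * (liftL B).map g = (d : ℂ) • Rc := by
      rw [← Matrix.map_mul, hAB, mapz]
    have hXYc : (liftL X).map g * Rc * (liftR Y).map g = (d : ℂ) • 1 := by
      rw [hRc, ← Matrix.map_mul, ← Matrix.map_mul, hXY, mapz,
        Matrix.map_one _ g.map_zero g.map_one]
    refine le_antisymm ?_ ?_
    · have h : Rc = ((d : ℂ)⁻¹ • (liftR A).map g) * (liftL B).map g := by
        rw [Matrix.smul_mul, hABc, smul_smul, inv_mul_cancel₀ hd, one_smul]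
      rw [h]
      calc (((d : ℂ)⁻¹ • (liftR A).map g) * (liftL B).map g).rank
          ≤ ((d : ℂ)⁻¹ • (liftR A).map g).rank := Matrix.rank_mul_le_left _ _
        _ ≤ Fintype.card (Fin S) := Matrix.rank_le_card_width _
        _ = S := Fintype.card_fin S
    · have h : ((d : ℂ)⁻¹ • (liftL X).map g) * Rc * (liftR Y).map g = 1 := by
        rw [Matrix.smul_mul, Matrix.smul_mul, hXYc, smul_smul, inv_mul_cancel₀ hd, one_smul]
      calc S = Fintype.card (Fin S) := (Fintype.card_fin S).symm
        _ = (1 : Matrix (Fin S) (Fin S) ℂ).rank := Matrix.rank_one.symm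
        _ = (((d : ℂ)⁻¹ • (liftL X).map g) * Rc * (liftR Y).map g).rank := by rw [h]
        _ ≤ (((d : ℂ)⁻¹ • (liftL X).map g) * Rc).rank := Matrix.rank_mul_le_left _ _
        _ ≤ Rc.rank := Matrix.rank_mul_le_right _ _

def Uq1 : Matrix (Fin 9) (Fin 9) ℤ :=
!![0, 0, 0, 0, 0, 0, 0, 0, -1;
  0, 0, 0, 0, 0, 0, 1, 0, 0;
  0, 0, 0, 0, 0, 0, 0, 1, 0;
  0, 0, -1, 0, 0, 0, 0, 0, 0;
  1, 0, 0, 0, 0, 0, 0, 0, 0;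
  0, 1, 0, 0, 0, 0, 0, 0, 0;
  0, 0, 0, 0, 0, -1, 0, 0, 0;
  0, 0, 0, 1, 0, 0, 0, 0, 0;
  0, 0, 0, 0, 1, 0, 0, 0, 0]

def A1 : Matrix (Fin 9) (Fin 1) ℤ :=
!![0;
  0;
  -1;
  -1;
  0;
  0;
  0;
  -1;
  0]

def B1 : Matrix (Fin 1) (Fin 9) ℤ :=
!![0, 0, -1, 1, 0, 0, 0, 1, 0]

def X1 : Matrix (Fin 1) (Fin 9) ℤ :=
!![0, 0, 1, 0, 0, 0, 0, 0, 0]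

def Y1 : Matrix (Fin 9) (Fin 1) ℤ :=
!![0;
  0;
  1;
  0;
  0;
  0;
  0;
  0;
  0]

-- m=1 d=-1

def Uq2 : Matrix (Fin 9) (Fin 9) ℤ :=
!![-1, 0, 0, 0, 0, 0, 0, 0, 0;
  0, 0, 1, 0, 0, 0, 0, 0, 0;
  0, -1, 0, 0, 0, 0, 0, 0, 0;
  0, 0, 0, 1, 0, 0, 0, 0, 0;
  0, 0, 0, 0, 0, -1, 0, 0, 0;
  0, 0, 0, 0, 1, 0, 0, 0, 0;
  0, 0, 0, 0, 0, 0, 0, 0, 1;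
  0, 0, 0, 0, 0, 0, -1, 0, 0;
  0, 0, 0, 0, 0, 0, 0, 1, 0]

def A2 : Matrix (Fin 9) (Fin 2) ℤ :=
!![-1, 0;
  0, 0;
  0, 0;
  0, 0;
  1, 0;
  0, 0;
  0, 0;
  0, 0;
  0, 1]

def B2 : Matrix (Fin 2) (Fin 9) ℤ :=
!![-1, 0, 0, 0, 0, 1, 0, -1, 0;
  0, 0, -1, 1, 0, 0, 0, -1, 0]

def X2 : Matrix (Fin 2) (Fin 9) ℤ :=
!![1, 0, 0, 0, 0, 0, 0, 0, 0;
  0, 0, 0, 0, 0, 0, 0, 0, -1]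

def Y2 : Matrix (Fin 9) (Fin 2) ℤ :=
!![1, 0;
  0, 0;
  0, 1;
  0, 0;
  0, 0;
  0, 0;
  0, 0;
  0, 0;
  0, 0]

-- m=1 d=-1

def Uq3 : Matrix (Fin 9) (Fin 9) ℤ :=
!![0, 1, 0, 0, 0, 0, 0, 0, 0;
  0, 0, 0, 0, 0, 1, 0, 0, 0;
  1, 0, 0, 0, 0, 0, 0, 0, 0;
  0, 0, 0, 0, -1, 0, 0, 0, 0;
  0, 0, -1, 0, 0, 0, 0, 0, 0;
  0, 0, 0, -1, 0, 0, 0, 0, 0;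
  0, 0, 0, 0, 0, 0, 0, 0, -1;
  0, 0, 0, 0, 0, 0, 0, -1, 0;
  0, 0, 0, 0, 0, 0, -1, 0, 0]

def A3 : Matrix (Fin 9) (Fin 3) ℤ :=
!![1, 0, 0;
  0, 0, 1;
  0, 0, 0;
  0, 0, -1;
  -1, 0, 0;
  0, 0, 0;
  0, 0, 0;
  0, 0, 0;
  0, -1, 0]

def B3 : Matrix (Fin 3) (Fin 9) ℤ :=
!![0, 1, 0, 0, 0, 0, 1, 0, 0;
  0, 0, 1, 0, 1, 0, 1, 0, 0;
  0, 0, 0, 0, 0, 1, 0, 0, 0]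

def X3 : Matrix (Fin 3) (Fin 9) ℤ :=
!![1, 0, 0, 0, 0, 0, 0, 0, 0;
  0, 0, 0, 0, 0, 0, 0, 0, -1;
  0, 1, 0, 0, 0, 0, 0, 0, 0]

def Y3 : Matrix (Fin 9) (Fin 3) ℤ :=
!![0, 0, 0;
  1, 0, 0;
  0, 1, 0;
  0, 0, 0;
  0, 0, 0;
  0, 0, 1;
  0, 0, 0;
  0, 0, 0;
  0, 0, 0]

-- m=1 d=1

def Uq4 : Matrix (Fin 9) (Fin 9) ℤ :=
!![0, 0, 0, 0, 1, 0, 0, 0, 0;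
  0, 0, 0, -1, 0, 0, 0, 0, 0;
  0, 0, 1, 0, 0, 0, 0, 0, 0;
  0, 0, 0, 0, 0, 0, 0, 0, 1;
  0, 1, 0, 0, 0, 0, 0, 0, 0;
  -1, 0, 0, 0, 0, 0, 0, 0, 0;
  0, 0, 0, 0, 0, 1, 0, 0, 0;
  0, 0, 0, 0, 0, 0, 0, 1, 0;
  0, 0, 0, 0, 0, 0, -1, 0, 0]

def A4 : Matrix (Fin 9) (Fin 4) ℤ :=
!![0, 0, 0, 1;
  1, 0, 0, 0;
  0, 0, 0, 0;
  0, 0, 1, 0;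
  0, 0, 0, 0;
  0, 1, 0, 0;
  0, 0, 0, 0;
  0, 1, 0, 0;
  0, 0, 1, 0]

def B4 : Matrix (Fin 4) (Fin 9) ℤ :=
!![0, 1, 0, -1, 0, 0, 0, 0, 0;
  0, 0, 1, 0, 0, 0, 0, 0, 0;
  0, 0, 0, 0, 1, 0, -1, 0, 0;
  0, 0, 0, 0, 0, 0, 0, 0, 1]

def X4 : Matrix (Fin 4) (Fin 9) ℤ :=
!![0, 1, 0, 0, 0, 0, 0, 0, 0;
  0, 0, 0, 0, 0, 1, 0, 0, 0;
  0, 0, 0, 1, 0, 0, 0, 0, 0;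
  1, 0, 0, 0, 0, 0, 0, 0, 0]

def Y4 : Matrix (Fin 9) (Fin 4) ℤ :=
!![0, 0, 0, 0;
  1, 0, 0, 0;
  0, 1, 0, 0;
  0, 0, 0, 0;
  0, 0, 1, 0;
  0, 0, 0, 0;
  0, 0, 0, 0;
  0, 0, 0, 0;
  0, 0, 0, 1]

-- m=1 d=1

def Uq5 : Matrix (Fin 9) (Fin 9) ℤ :=
!![0, 0, 0, 0, -1, 0, 0, 0, 0;
  0, 0, 0, 0, 0, 1, 0, 0, 0;
  0, 0, 0, 0, 0, 0, -1, 0, 0;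
  0, 0, 1, 0, 0, 0, 0, 0, 0;
  0, -1, 0, 0, 0, 0, 0, 0, 0;
  0, 0, 0, 1, 0, 0, 0, 0, 0;
  1, 0, 0, 0, 0, 0, 0, 0, 0;
  0, 0, 0, 0, 0, 0, 0, 0, 1;
  0, 0, 0, 0, 0, 0, 0, 1, 0]

def A5 : Matrix (Fin 9) (Fin 5) ℤ :=
!![0, 0, 0, 0, 0;
  0, -1, 0, 1, 0;
  0, 0, 0, 0, -1;
  0, 0, 1, 0, 0;
  0, 0, 0, 0, 1;
  0, 0, 0, 0, 0;
  1, 0, 0, 0, 0;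
  0, 0, 0, 0, 0;
  0, 0, 0, 1, 0]

def B5 : Matrix (Fin 5) (Fin 9) ℤ :=
!![-1, 0, 0, 0, 0, 0, 0, 0, 0;
  0, -1, 0, 0, 0, 0, 0, -1, 0;
  0, 0, -1, 0, 1, 0, 0, 0, 0;
  0, 0, 0, 0, 0, -1, 0, -1, 0;
  0, 0, 0, 0, 0, 0, -1, 0, 0]

def X5 : Matrix (Fin 5) (Fin 9) ℤ :=
!![0, 0, 0, 0, 0, 0, -1, 0, 0;
  0, 1, 0, 0, 0, 0, 0, 0, -1;
  0, 0, 0, -1, 0, 0, 0, 0, 0;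
  0, 0, 0, 0, 0, 0, 0, 0, -1;
  0, 0, 1, 0, 0, 0, 0, 0, 0]

def Y5 : Matrix (Fin 9) (Fin 5) ℤ :=
!![1, 0, 0, 0, 0;
  0, 1, 0, 0, 0;
  0, 0, 1, 0, 0;
  0, 0, 0, 0, 0;
  0, 0, 0, 0, 0;
  0, 0, 0, 1, 0;
  0, 0, 0, 0, 1;
  0, 0, 0, 0, 0;
  0, 0, 0, 0, 0]

-- m=1 d=-1

def Uq6 : Matrix (Fin 9) (Fin 9) ℤ :=
!![0, 1, 0, 0, 0, 0, 0, 0, 0;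
  0, 0, -1, 0, 0, 0, 0, 0, 0;
  0, 0, 0, 0, -1, 0, 0, 0, 0;
  0, 0, 0, 0, 0, 0, -1, 0, 0;
  0, 0, 0, 0, 0, 0, 0, 0, 1;
  -1, 0, 0, 0, 0, 0, 0, 0, 0;
  0, 0, 0, -1, 0, 0, 0, 0, 0;
  0, 0, 0, 0, 0, 0, 0, -1, 0;
  0, 0, 0, 0, 0, -1, 0, 0, 0]

def A6 : Matrix (Fin 9) (Fin 6) ℤ :=
!![0, 1, 0, -1, 0, 0;
  0, 0, 0, 0, 0, -1;
  0, 0, 0, 0, 0, 0;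
  0, 0, 0, 0, -1, 0;
  0, 0, 0, 0, 0, 0;
  -1, 0, 0, 1, 0, 0;
  0, 0, 0, 0, 0, 0;
  -1, 0, 0, 0, 0, 0;
  0, 0, -1, 0, 0, 0]

def B6 : Matrix (Fin 6) (Fin 9) ℤ :=
!![1, 0, 0, 0, 0, 0, 0, 0, 1;
  0, 1, 0, 0, 0, 0, 0, 0, 1;
  0, 0, 0, 0, 1, 0, 0, 0, 0;
  0, 0, 0, 0, 0, 1, 0, 0, 1;
  0, 0, 0, 0, 0, 0, 1, 0, 0;
  0, 0, 0, 0, 0, 0, 0, 1, 0]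

def X6 : Matrix (Fin 6) (Fin 9) ℤ :=
!![0, 0, 0, 0, 0, 0, 0, -1, 0;
  1, 0, 0, 0, 0, 1, 0, -1, 0;
  0, 0, 0, 0, 0, 0, 0, 0, -1;
  0, 0, 0, 0, 0, 1, 0, -1, 0;
  0, 0, 0, -1, 0, 0, 0, 0, 0;
  0, -1, 0, 0, 0, 0, 0, 0, 0]

def Y6 : Matrix (Fin 9) (Fin 6) ℤ :=
!![1, 0, 0, 0, 0, 0;
  0, 1, 0, 0, 0, 0;
  0, 0, 0, 0, 0, 0;
  0, 0, 0, 0, 0, 0;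
  0, 0, 1, 0, 0, 0;
  0, 0, 0, 1, 0, 0;
  0, 0, 0, 0, 1, 0;
  0, 0, 0, 0, 0, 1;
  0, 0, 0, 0, 0, 0]

-- m=1 d=1

def Uq7 : Matrix (Fin 9) (Fin 9) ℤ :=
!![0, 0, 0, -1, 0, 0, 0, 0, 0;
  0, 0, 1, 0, 0, 0, 0, 0, 0;
  0, 0, 0, 0, 0, 0, 0, -1, 0;
  0, 0, 0, 0, -1, 0, 0, 0, 0;
  0, 0, 0, 0, 0, 0, 1, 0, 0;
  0, 0, 0, 0, 0, 0, 0, 0, -1;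
  0, 0, 0, 0, 0, -1, 0, 0, 0;
  0, -1, 0, 0, 0, 0, 0, 0, 0;
  -1, 0, 0, 0, 0, 0, 0, 0, 0]

def A7 : Matrix (Fin 9) (Fin 7) ℤ :=
!![0, 0, 0, 0, 0, 1, 0;
  -1, 0, 0, 0, 0, 0, 0;
  0, 0, 0, 0, 0, 0, -1;
  0, 0, 0, 0, 0, 0, 0;
  0, -1, 0, 0, 0, 0, 0;
  0, 0, 0, 1, 0, 0, 0;
  0, 0, 0, 0, -1, 0, 0;
  0, 0, -1, 0, 0, 0, 0;
  0, 0, 0, 0, 0, 0, 0]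

def B7 : Matrix (Fin 7) (Fin 9) ℤ :=
!![1, 0, 0, 0, 0, 0, 0, 0, 0;
  0, 1, 0, 0, 0, 0, 0, 0, 0;
  0, 0, 1, 0, 0, 0, 0, 0, 0;
  0, 0, 0, 1, 0, 0, 0, 0, -1;
  0, 0, 0, 0, 1, 0, 1, 0, 0;
  0, 0, 0, 0, 0, 1, 0, 0, 0;
  0, 0, 0, 0, 0, 0, 0, 1, 0]

def X7 : Matrix (Fin 7) (Fin 9) ℤ :=
!![0, -1, 0, 0, 0, 0, 0, 0, 0;
  0, 0, 0, 0, -1, 0, 0, 0, 0;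
  0, 0, 0, 0, 0, 0, 0, -1, 0;
  0, 0, 0, 0, 0, 1, 0, 0, 0;
  0, 0, 0, 0, 0, 0, -1, 0, 0;
  1, 0, 0, 0, 0, 0, 0, 0, 0;
  0, 0, -1, 0, 0, 0, 0, 0, 0]

def Y7 : Matrix (Fin 9) (Fin 7) ℤ :=
!![1, 0, 0, 0, 0, 0, 0;
  0, 1, 0, 0, 0, 0, 0;
  0, 0, 1, 0, 0, 0, 0;
  0, 0, 0, 1, 0, 0, 0;
  0, 0, 0, 0, 1, 0, 0;
  0, 0, 0, 0, 0, 1, 0;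
  0, 0, 0, 0, 0, 0, 0;
  0, 0, 0, 0, 0, 0, 1;
  0, 0, 0, 0, 0, 0, 0]

-- m=1 d=1

def Uq8 : Matrix (Fin 9) (Fin 9) ℤ :=
!![1, 0, 0, 0, 0, -2, 0, -2, 0;
  2, 0, 0, 0, 0, -1, 0, 2, 0;
  0, 2, 0, -2, 1, 0, 0, 0, 0;
  0, 0, 1, 0, 0, 0, -2, 0, 2;
  0, 0, 2, 0, 0, 0, -1, 0, -2;
  0, -2, 0, -1, 2, 0, 0, 0, 0;
  0, 0, -2, 0, 0, 0, -2, 0, -1;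
  2, 0, 0, 0, 0, 2, 0, -1, 0;
  0, 1, 0, 2, 2, 0, 0, 0, 0]

def A8 : Matrix (Fin 9) (Fin 8) ℤ :=
!![1, 0, 0, 2, 0, 0, 0, 2;
  0, 0, -2, 0, 0, -1, -2, 1;
  0, -2, 0, 0, 2, 0, 0, 0;
  0, 0, 1, 0, 0, 2, 0, -2;
  0, 0, 0, 0, 0, 0, -1, 2;
  -2, 0, 2, -1, 0, -2, 0, 0;
  0, 0, -2, 2, 0, 0, 0, 1;
  0, 0, 0, 0, 0, 2, 2, 2;
  -2, 0, -1, 0, -1, 0, 0, 0]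

def B8 : Matrix (Fin 8) (Fin 9) ℤ :=
!![186, 0, 0, 0, 0, 0, 0, 0, 0;
  0, 186, 0, 0, 0, 0, 0, 0, 0;
  0, 0, 186, 0, 0, 0, 0, 0, 0;
  0, 0, 0, 186, 0, 0, 0, 0, 0;
  0, 0, 0, 0, 186, 0, 0, 0, 0;
  0, 0, 0, 0, 0, 186, 0, 0, 0;
  0, 0, 0, 0, 0, 0, 186, 0, 0;
  0, 0, 0, 0, 0, 0, 0, 186, 0]

def X8 : Matrix (Fin 8) (Fin 9) ℤ :=
!![82, 40, 0, -32, -80, -52, -108, 0, 0;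
  -228, -84, -93, 30, 168, 72, 264, 0, -186;
  64, 4, 0, 34, -8, 32, -48, 0, 0;
  76, 28, 0, 52, -56, 38, 36, 0, 0;
  -228, -84, 0, 30, 168, 72, 264, 0, -186;
  -56, -50, 0, 40, 100, -28, 42, 0, 0;
  -48, -96, 0, -72, 6, -24, 36, 0, 0;
  -24, -48, 0, -36, 96, -12, 18, 0, 0]

def Y8 : Matrix (Fin 9) (Fin 8) ℤ :=
!![1, 0, 0, 0, 0, 0, 0, 0;
  0, 1, 0, 0, 0, 0, 0, 0;
  0, 0, 1, 0, 0, 0, 0, 0;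
  0, 0, 0, 1, 0, 0, 0, 0;
  0, 0, 0, 0, 1, 0, 0, 0;
  0, 0, 0, 0, 0, 1, 0, 0;
  0, 0, 0, 0, 0, 0, 1, 0;
  0, 0, 0, 0, 0, 0, 0, 1;
  0, 0, 0, 0, 0, 0, 0, 0]

-- m=3 d=186

def Uq9 : Matrix (Fin 9) (Fin 9) ℤ :=
!![0, 1, 0, 0, 0, 0, 0, 0, 0;
  0, 0, 0, 0, 0, 0, 0, -1, 0;
  0, 0, 0, -1, 0, 0, 0, 0, 0;
  0, 0, 0, 0, 0, 0, 1, 0, 0;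
  0, 0, -1, 0, 0, 0, 0, 0, 0;
  0, 0, 0, 0, -1, 0, 0, 0, 0;
  0, 0, 0, 0, 0, 0, 0, 0, 1;
  1, 0, 0, 0, 0, 0, 0, 0, 0;
  0, 0, 0, 0, 0, 1, 0, 0, 0]

def A9 : Matrix (Fin 9) (Fin 9) ℤ :=
!![0, 1, 0, 0, 0, 0, 0, 0, 0;
  0, 0, 0, 0, 0, 0, -1, 0, 0;
  0, 0, 0, 0, -1, 0, 0, 0, 0;
  0, 0, 0, 0, 0, -1, 0, 0, 0;
  0, 0, 0, 0, 0, 0, 0, -1, 0;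
  1, 0, 0, 0, 0, 0, 0, 0, 0;
  0, 0, 0, 1, 0, 0, 0, 0, 0;
  0, 0, 0, 0, 0, 0, 0, 0, 1;
  0, 0, 1, 0, 0, 0, 0, 0, 0]

def B9 : Matrix (Fin 9) (Fin 9) ℤ :=
!![-1, 0, 0, 0, 0, 0, 0, 0, 0;
  0, -1, 0, 0, 0, 0, 0, 0, 0;
  0, 0, -1, 0, 0, 0, 0, 0, 0;
  0, 0, 0, -1, 0, 0, 0, 0, 0;
  0, 0, 0, 0, -1, 0, 0, 0, 0;
  0, 0, 0, 0, 0, -1, 0, 0, 0;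
  0, 0, 0, 0, 0, 0, -1, 0, 0;
  0, 0, 0, 0, 0, 0, 0, -1, 0;
  0, 0, 0, 0, 0, 0, 0, 0, -1]

def X9 : Matrix (Fin 9) (Fin 9) ℤ :=
!![0, 0, 0, 0, 0, -1, 0, 0, 0;
  -1, 0, 0, 0, 0, 0, 0, 0, 0;
  0, 0, 0, 0, 0, 0, 0, 0, -1;
  0, 0, 0, 0, 0, 0, -1, 0, 0;
  0, 0, 1, 0, 0, 0, 0, 0, 0;
  0, 0, 0, 1, 0, 0, 0, 0, 0;
  0, 1, 0, 0, 0, 0, 0, 0, 0;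
  0, 0, 0, 0, 1, 0, 0, 0, 0;
  0, 0, 0, 0, 0, 0, 0, -1, 0]

def Y9 : Matrix (Fin 9) (Fin 9) ℤ :=
!![1, 0, 0, 0, 0, 0, 0, 0, 0;
  0, 1, 0, 0, 0, 0, 0, 0, 0;
  0, 0, 1, 0, 0, 0, 0, 0, 0;
  0, 0, 0, 1, 0, 0, 0, 0, 0;
  0, 0, 0, 0, 1, 0, 0, 0, 0;
  0, 0, 0, 0, 0, 1, 0, 0, 0;
  0, 0, 0, 0, 0, 0, 1, 0, 0;
  0, 0, 0, 0, 0, 0, 0, 1, 0;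
  0, 0, 0, 0, 0, 0, 0, 0, 1]

-- m=1 d=-1

set_option maxHeartbeats 1000000

lemma ex1 : ∃ V : Matrix (Fin 3 × Fin 3) (Fin 3 × Fin 3) ℂ, Vᴴ * V = 1 ∧ (realign V).rank = 1 :=
  main 1 (-1) (by norm_num) (by norm_num) Uq1 A1 B1 X1 Y1 (by decide) (by decide) (by decide)
lemma ex2 : ∃ V : Matrix (Fin 3 × Fin 3) (Fin 3 × Fin 3) ℂ, Vᴴ * V = 1 ∧ (realign V).rank = 2 :=
  main 1 (-1) (by norm_num) (by norm_num) Uq2 A2 B2 X2 Y2 (by decide) (by decide) (by decide)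
lemma ex3 : ∃ V : Matrix (Fin 3 × Fin 3) (Fin 3 × Fin 3) ℂ, Vᴴ * V = 1 ∧ (realign V).rank = 3 :=
  main 1 1 (by norm_num) (by norm_num) Uq3 A3 B3 X3 Y3 (by decide) (by decide) (by decide)
lemma ex4 : ∃ V : Matrix (Fin 3 × Fin 3) (Fin 3 × Fin 3) ℂ, Vᴴ * V = 1 ∧ (realign V).rank = 4 :=
  main 1 1 (by norm_num) (by norm_num) Uq4 A4 B4 X4 Y4 (by decide) (by decide) (by decide)
lemma ex5 : ∃ V : Matrix (Fin 3 × Fin 3) (Fin 3 × Fin 3) ℂ, Vᴴ * V = 1 ∧ (realign V).rank = 5 :=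
  main 1 (-1) (by norm_num) (by norm_num) Uq5 A5 B5 X5 Y5 (by decide) (by decide) (by decide)
lemma ex6 : ∃ V : Matrix (Fin 3 × Fin 3) (Fin 3 × Fin 3) ℂ, Vᴴ * V = 1 ∧ (realign V).rank = 6 :=
  main 1 1 (by norm_num) (by norm_num) Uq6 A6 B6 X6 Y6 (by decide) (by decide) (by decide)
lemma ex7 : ∃ V : Matrix (Fin 3 × Fin 3) (Fin 3 × Fin 3) ℂ, Vᴴ * V = 1 ∧ (realign V).rank = 7 :=
  main 1 1 (by norm_num) (by norm_num) Uq7 A7 B7 X7 Y7 (by decide) (by decide) (by decide)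
lemma ex8 : ∃ V : Matrix (Fin 3 × Fin 3) (Fin 3 × Fin 3) ℂ, Vᴴ * V = 1 ∧ (realign V).rank = 8 :=
  main 3 186 (by norm_num) (by norm_num) Uq8 A8 B8 X8 Y8 (by decide) (by decide) (by decide)
lemma ex9 : ∃ V : Matrix (Fin 3 × Fin 3) (Fin 3 × Fin 3) ℂ, Vᴴ * V = 1 ∧ (realign V).rank = 9 :=
  main 1 (-1) (by norm_num) (by norm_num) Uq9 A9 B9 X9 Y9 (by decide) (by decide) (by decide)

end Stmt9Aux

open Stmt9Aux in
/-- For every `S ∈ {1,…,9}` there is a unitary on `ℂ³ ⊗ ℂ³` with operator-Schmidt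
number `S`. -/
theorem stmt_9 :
    ∀ S ∈ ({1, 2, 3, 4, 5, 6, 7, 8, 9} : Finset ℕ),
      ∃ U : Matrix (Fin 3 × Fin 3) (Fin 3 × Fin 3) ℂ,
        Uᴴ * U = 1 ∧ (realign U).rank = S := by
  intro S hS
  fin_cases hS
  exacts [ex1, ex2, ex3, ex4, ex5, ex6, ex7, ex8, ex9]
end

section
/- Let n ≥ 1 and let ι be a finite type with Fintype.card ι = n². Suppose A : ι → Matrix (Fin n) (Fin n) ℂ is an orthonormal family for the Hilbert–Schmidt inner product: trace((A i)ᴴ * A j) = 1 if i = j and 0 otherwise. Then Σ_{i ∈ ι} (A i) ⊗ₖ (A i)ᴴ = SWAP, where ⊗ₖ is the Kronecker product and SWAP : Matrix (Fin n × Fin n) (Fin n × Fin n) ℂ is defined by SWAP (p,q) (r,s) = 1 if p = s and q = r, and 0 otherwise. -/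
open Matrix Kronecker

/-!
Flattening matrices into vectors turns the Hilbert–Schmidt inner product into the Euclidean one,
so `A` becomes an orthonormal family of `n²` vectors in an `n²`-dimensional space, i.e. an
orthonormal basis. The matrix with these vectors as columns is then unitary, and its rows are
orthonormal too; this completeness relation `∑ i, A i p q * conj (A i r s) = δ_{(p,q),(r,s)}` is
exactly the entrywise form of `∑ i, A i ⊗ₖ (A i)ᴴ = SWAP`.
-/

section

variable {𝕜 ι κ m n : Type*} [RCLike 𝕜] [Fintype m] [Fintype n]

theorem Orthonormal.sum_mul_star_eq_ite [Fintype ι] [Fintype κ] [DecidableEq κ]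
    {v : ι → EuclideanSpace 𝕜 κ} (hv : Orthonormal 𝕜 v)
    (hcard : Fintype.card ι = Fintype.card κ) (x y : κ) :
    ∑ i, v i x * star (v i y) = if x = y then 1 else 0 := by
  have : Nonempty ι := Fintype.card_pos_iff.mp (hcard ▸ Fintype.card_pos_iff.mpr ⟨x⟩)
  let b : OrthonormalBasis ι 𝕜 (EuclideanSpace 𝕜 κ) :=
    (basisOfOrthonormalOfCardEqFinrank hv (by simpa using hcard)).toOrthonormalBasis
      (by rwa [coe_basisOfOrthonormalOfCardEqFinrank])
  have hb : ⇑b = v := by simp [b, coe_basisOfOrthonormalOfCardEqFinrank]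
  have hunitary := (EuclideanSpace.basisFun κ 𝕜).toMatrix_orthonormalBasis_self_mul_conjTranspose b
  simpa [mul_apply, Module.Basis.toMatrix_apply, hb, one_apply] using congr_fun₂ hunitary x y

theorem orthonormal_toLp_vec_iff [DecidableEq ι] {A : ι → Matrix m n 𝕜} :
    Orthonormal 𝕜 (fun i => WithLp.toLp 2 (A i).vec) ↔
      ∀ i j, ((A i)ᴴ * A j).trace = if i = j then 1 else 0 := by
  simp only [orthonormal_iff_ite, EuclideanSpace.inner_toLp_toLp, dotProduct_comm _ (star _),
    star_vec_dotProduct_vec]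

theorem sum_kronecker_conjTranspose_eq_swap [Fintype ι] [DecidableEq ι] [DecidableEq m]
    [DecidableEq n] (A : ι → Matrix m n 𝕜)
    (hcard : Fintype.card ι = Fintype.card m * Fintype.card n)
    (horth : ∀ i j, ((A i)ᴴ * A j).trace = if i = j then 1 else 0) :
    ∑ i, A i ⊗ₖ (A i)ᴴ = of fun p q => if p.1 = q.2 ∧ p.2 = q.1 then 1 else 0 := by
  ext ⟨p₁, p₂⟩ ⟨q₁, q₂⟩
  have hcomplete := (orthonormal_toLp_vec_iff.mpr horth).sum_mul_star_eq_ite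
    (by rw [hcard, Fintype.card_prod, mul_comm]) (q₁, p₁) (p₂, q₂)
  simp only [Matrix.sum_apply, kroneckerMap_apply, conjTranspose_apply, of_apply]
  simpa [Prod.ext_iff, eq_comm, and_comm] using hcomplete

end

theorem stmt_10_general (n : ℕ) (ι : Type*) [Fintype ι] [DecidableEq ι]
    (hcard : Fintype.card ι = n ^ 2) (A : ι → Matrix (Fin n) (Fin n) ℂ)
    (horth : ∀ i j : ι, ((A i)ᴴ * A j).trace = if i = j then 1 else 0) :
    ∑ i : ι, (A i) ⊗ₖ (A i)ᴴ =
      (fun p q : Fin n × Fin n => if p.1 = q.2 ∧ p.2 = q.1 then (1 : ℂ) else 0) :=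
  sum_kronecker_conjTranspose_eq_swap A (by simp [hcard, sq]) horth

/-- If `{A i}` is an orthonormal family of `n²` matrices for the Hilbert–Schmidt inner
product, then `Σ i, (A i) ⊗ₖ (A i)ᴴ` is the SWAP operator on `ℂⁿ ⊗ ℂⁿ`. -/
theorem stmt_10 (n : ℕ) (hn : 1 ≤ n) (ι : Type*) [Fintype ι] [DecidableEq ι]
    (hcard : Fintype.card ι = n ^ 2) (A : ι → Matrix (Fin n) (Fin n) ℂ)
    (horth : ∀ i j : ι, ((A i)ᴴ * A j).trace = if i = j then 1 else 0) :
    ∑ i : ι, (A i) ⊗ₖ (A i)ᴴ =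
      (fun p q : Fin n × Fin n => if p.1 = q.2 ∧ p.2 = q.1 then (1 : ℂ) else 0) :=
  stmt_10_general n ι hcard A horth
end

section
/- Let N ≥ 1, let R, T be the shift and twist matrices on ZMod N, and let F : Matrix (ZMod N) (ZMod N) ℂ be a unitary matrix satisfying the Fourier relations F * R = T * F and F * T = Rᴴ * F. Then F is a scalar multiple of the discrete Fourier transform matrix: there exists c : ℂ with ‖c‖ = 1 such that F = c • 𝓕, where 𝓕 j k = exp(2πi·j.val·k.val/N)/√N. -/
open Matrix Complex

/-- The discrete Fourier transform matrix `𝓕 j k = exp(2πi jk/N)/√N`. -/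
noncomputable def dftM (N : ℕ) [NeZero N] : Matrix (ZMod N) (ZMod N) ℂ :=
  fun j k => Complex.exp (2 * Real.pi * Complex.I * (j.val * k.val) / N) / Real.sqrt N

theorem ZMod.apply_eq_pow_val_mul {N : ℕ} [NeZero N] {M : Type*} [Monoid M]
    (f : ZMod N → M) (a : M) (h : ∀ k, f (k + 1) = a * f k) (k : ZMod N) :
    f k = a ^ k.val * f 0 := by
  suffices ∀ n : ℕ, f n = a ^ n * f 0 by simpa using this k.val
  intro n
  induction n with
  | zero => simp
  | succ n ih => rw [Nat.cast_succ, h, ih, pow_succ', mul_assoc]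

theorem ofReal_sqrt_natCast_ne_zero (N : ℕ) [NeZero N] : ((Real.sqrt N : ℝ) : ℂ) ≠ 0 := by
  exact_mod_cast (Real.sqrt_pos.2 (Nat.cast_pos.2 (NeZero.pos N))).ne'

theorem exp_twist_pow_val {N : ℕ} (j k : ZMod N) :
    Complex.exp (2 * Real.pi * Complex.I * j.val / N) ^ k.val =
      Complex.exp (2 * Real.pi * Complex.I * (j.val * k.val) / N) := by
  rw [← Complex.exp_nat_mul]
  congr 1
  ring

section FourierRelations

variable {N : ℕ} [NeZero N] (A : Matrix (ZMod N) (ZMod N) ℂ) (j k : ZMod N)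

theorem mul_shiftM_apply : (A * shiftM N) j k = A j (k + 1) := by
  simp [mul_apply, shiftM]

theorem conjTranspose_shiftM_mul_apply : ((shiftM N)ᴴ * A) j k = A (j + 1) k := by
  simp [mul_apply, shiftM, conjTranspose_apply]

theorem twistM_mul_apply :
    (twistM N * A) j k = Complex.exp (2 * Real.pi * Complex.I * j.val / N) * A j k := by
  simp [mul_apply, twistM]

theorem mul_twistM_apply :
    (A * twistM N) j k = A j k * Complex.exp (2 * Real.pi * Complex.I * k.val / N) := by
  simp [mul_apply, twistM]

/-- The two relations determine `F` from its corner entry: `T` makes each row geometric with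
ratio `exp(2πi j/N)`, and `Rᴴ` makes column `0` constant. -/
theorem eq_smul_dftM_of_intertwines {F : Matrix (ZMod N) (ZMod N) ℂ}
    (hR : F * shiftM N = twistM N * F) (hT : F * twistM N = (shiftM N)ᴴ * F) :
    F = (F 0 0 * Real.sqrt N) • dftM N := by
  have hrow (j k : ZMod N) :
      F j (k + 1) = Complex.exp (2 * Real.pi * Complex.I * j.val / N) * F j k := by
    rw [← mul_shiftM_apply F, hR, twistM_mul_apply]
  have hcol (j : ZMod N) : F (j + 1) 0 = 1 * F j 0 := by
    have := congrFun₂ hT j 0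
    rw [mul_twistM_apply, conjTranspose_shiftM_mul_apply] at this
    simpa using this.symm
  have hsqrt := ofReal_sqrt_natCast_ne_zero N
  ext j k
  rw [ZMod.apply_eq_pow_val_mul (F j) _ (hrow j) k,
    ZMod.apply_eq_pow_val_mul (F · 0) 1 hcol j, exp_twist_pow_val, one_pow, one_mul,
    Matrix.smul_apply, smul_eq_mul, dftM]
  field_simp

theorem dftM_apply_zero_right (j : ZMod N) : dftM N j 0 = 1 / Real.sqrt N := by
  simp [dftM]

theorem norm_eq_one_of_smul_dftM_unitary {c : ℂ}
    (hU : (c • dftM N)ᴴ * (c • dftM N) = 1) : ‖c‖ = 1 := by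
  have hcorner := congrFun₂ hU 0 0
  have hsqrt_ne := ofReal_sqrt_natCast_ne_zero N
  simp only [mul_apply, conjTranspose_apply, Matrix.smul_apply, dftM_apply_zero_right,
    smul_eq_mul, RCLike.star_def, map_mul, map_div₀, map_one, conj_ofReal, Finset.sum_const,
    Finset.card_univ, ZMod.card, nsmul_eq_mul, one_apply_eq] at hcorner
  have hsqrt : ((Real.sqrt N : ℝ) : ℂ) ^ 2 = N := by
    rw [← ofReal_pow, Real.sq_sqrt (Nat.cast_nonneg N), ofReal_natCast]
  have hsq : ((‖c‖ ^ 2 : ℝ) : ℂ) = 1 := by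
    rw [ofReal_pow, ← Complex.conj_mul', ← hcorner, ← hsqrt]
    field_simp
  exact (pow_eq_one_iff_of_nonneg (norm_nonneg c) two_ne_zero).1 (by exact_mod_cast hsq)

end FourierRelations

theorem stmt_11_general (N : ℕ) [NeZero N] (F : Matrix (ZMod N) (ZMod N) ℂ)
    (hU : Fᴴ * F = 1) (hR : F * shiftM N = twistM N * F)
    (hT : F * twistM N = (shiftM N)ᴴ * F) :
    ∃ c : ℂ, ‖c‖ = 1 ∧ F = c • dftM N := by
  have hF := eq_smul_dftM_of_intertwines hR hT
  exact ⟨_, norm_eq_one_of_smul_dftM_unitary (hF ▸ hU), hF⟩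

/-- A unitary intertwining `R ↦ T` and `T ↦ R⁻¹` is a phase times the Fourier matrix. -/
theorem stmt_11 (N : ℕ) [NeZero N] (hN : 1 ≤ N) (F : Matrix (ZMod N) (ZMod N) ℂ)
    (hU : Fᴴ * F = 1) (hR : F * shiftM N = twistM N * F)
    (hT : F * twistM N = (shiftM N)ᴴ * F) :
    ∃ c : ℂ, ‖c‖ = 1 ∧ F = c • dftM N :=
  stmt_11_general N F hU hR hT
end

section
/- (Finite-dimensional Stone–von Neumann/Weyl uniqueness.) Let N ≥ 1 and let A, B : Matrix (ZMod N) (ZMod N) ℂ be unitary matrices satisfying A^N = 1, B^N = 1, and the Weyl relation B * A = exp(2πi/N) • (A * B). Then this representation is unitarily equivalent to the standard one: there exists a unitary matrix V : Matrix (ZMod N) (ZMod N) ℂ such that V * A * Vᴴ = R and V * B * Vᴴ = T, where R and T are the shift and twist matrices. -/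
open Matrix Complex

section Aux

variable {N : ℕ} [NeZero N]

private lemma pow_mod_eq {A : Matrix (ZMod N) (ZMod N) ℂ} (hAN : A ^ N = 1) (m : ℕ) :
    A ^ (m % N) = A ^ m := by
  conv_rhs => rw [← Nat.mod_add_div m N]
  rw [pow_add, pow_mul, hAN, one_pow, mul_one]

private lemma weyl_pow {A B : Matrix (ZMod N) (ZMod N) ℂ}
    (h : B * A = Complex.exp (2 * Real.pi * Complex.I / N) • (A * B)) (m : ℕ) :
    B * A ^ m = (Complex.exp (2 * Real.pi * Complex.I / N)) ^ m • (A ^ m * B) := by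
  induction m with
  | zero => simp
  | succ m ih =>
    calc B * A ^ (m + 1) = (B * A ^ m) * A := by rw [pow_succ, mul_assoc]
    _ = Complex.exp (2 * Real.pi * Complex.I / N) ^ m • (A ^ m * (B * A)) := by
        rw [ih, smul_mul_assoc, mul_assoc (A ^ m)]
    _ = Complex.exp (2 * Real.pi * Complex.I / N) ^ (m + 1) • (A ^ (m + 1) * B) := by
        rw [h, Matrix.mul_smul, smul_smul, ← pow_succ, ← mul_assoc, ← pow_succ]

private lemma mulVec_pow_eig {B : Matrix (ZMod N) (ZMod N) ℂ} {u : ZMod N → ℂ} {μ : ℂ}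
    (hu : B *ᵥ u = μ • u) (m : ℕ) : B ^ m *ᵥ u = μ ^ m • u := by
  induction m with
  | zero => simp
  | succ m ih =>
    rw [pow_succ, ← Matrix.mulVec_mulVec, hu, Matrix.mulVec_smul, ih, smul_smul, ← pow_succ']

private lemma inner_mulVec {M : Matrix (ZMod N) (ZMod N) ℂ} (hM : Mᴴ * M = 1)
    (x y : ZMod N → ℂ) : star (M *ᵥ x) ⬝ᵥ (M *ᵥ y) = star x ⬝ᵥ y := by
  rw [Matrix.star_mulVec, Matrix.dotProduct_mulVec, Matrix.vecMul_vecMul, hM,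
    Matrix.vecMul_one]

end Aux

/-- Finite-dimensional Stone–von Neumann/Weyl uniqueness: any unitary pair satisfying the
discrete Weyl relations on `ℂ^N` is unitarily equivalent to the shift-and-twist pair. -/
theorem stmt_12 (N : ℕ) [NeZero N] (hN : 1 ≤ N) (A B : Matrix (ZMod N) (ZMod N) ℂ)
    (hA : Aᴴ * A = 1) (hB : Bᴴ * B = 1) (hAN : A ^ N = 1) (hBN : B ^ N = 1)
    (hWeyl : B * A = Complex.exp (2 * Real.pi * Complex.I / N) • (A * B)) :
    ∃ V : Matrix (ZMod N) (ZMod N) ℂ, Vᴴ * V = 1 ∧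
      V * A * Vᴴ = shiftM N ∧ V * B * Vᴴ = twistM N := by
  have hNne : N ≠ 0 := NeZero.ne N
  set ω : ℂ := Complex.exp (2 * Real.pi * Complex.I / N) with hω
  have hprim : IsPrimitiveRoot ω N := Complex.isPrimitiveRoot_exp N hNne
  have hωN : ω ^ N = 1 := hprim.pow_eq_one
  have hω0 : ω ≠ 0 := Complex.exp_ne_zero _
  have hconjω : star ω = ω⁻¹ := by
    have h1 : (starRingEnd ℂ) (2 * (Real.pi : ℂ) * Complex.I / N) =
        -(2 * (Real.pi : ℂ) * Complex.I / N) := by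
      simp only [map_div₀, _root_.map_mul, Complex.conj_I, Complex.conj_ofReal,
        map_ofNat, Complex.conj_natCast]
      ring
    rw [hω, RCLike.star_def, ← Complex.exp_conj, h1, Complex.exp_neg]
  -- eigenvector of B
  obtain ⟨μ, hμ⟩ := Module.End.exists_eigenvalue (Matrix.toLin' B)
  obtain ⟨u, humem⟩ := hμ.exists_hasEigenvector
  have huB : B *ᵥ u = μ • u := by
    have := humem.apply_eq_smul
    rwa [Matrix.toLin'_apply] at this
  have hu0 : u ≠ 0 := humem.2
  have hμN : μ ^ N = 1 := by
    have h1 : B ^ N *ᵥ u = μ ^ N • u := mulVec_pow_eig huB N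
    rw [hBN, Matrix.one_mulVec] at h1
    have h2 : (μ ^ N - 1) • u = 0 := by rw [sub_smul, one_smul, ← h1, sub_self]
    rcases smul_eq_zero.mp h2 with h | h
    · exact sub_eq_zero.mp h
    · exact absurd h hu0
  obtain ⟨m, hmlt, hm⟩ := hprim.eq_pow_of_pow_eq_one hμN
  -- eigenvector of B with eigenvalue 1
  set v0 : ZMod N → ℂ := A ^ (N - m) *ᵥ u with hv0def
  have hv0B : B *ᵥ v0 = v0 := by
    rw [hv0def, Matrix.mulVec_mulVec, weyl_pow hWeyl, ← hω, Matrix.smul_mulVec,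
      ← Matrix.mulVec_mulVec, huB, Matrix.mulVec_smul, smul_smul, ← hm, ← pow_add,
      Nat.sub_add_cancel hmlt.le, hωN, one_smul]
  have hv00 : v0 ≠ 0 := by
    intro h
    apply hu0
    have h2 : A ^ m *ᵥ v0 = u := by
      rw [hv0def, Matrix.mulVec_mulVec, ← pow_add, Nat.add_sub_cancel' hmlt.le, hAN,
        Matrix.one_mulVec]
    rw [h, Matrix.mulVec_zero] at h2
    exact h2.symm
  -- normalize
  set r : ℝ := ∑ i, Complex.normSq (v0 i) with hrdef
  have hrpos : 0 < r := by
    obtain ⟨i, hi⟩ := Function.ne_iff.mp hv00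
    exact Finset.sum_pos' (fun j _ => Complex.normSq_nonneg _)
      ⟨i, Finset.mem_univ i, Complex.normSq_pos.mpr hi⟩
  set v : ZMod N → ℂ := (((Real.sqrt r)⁻¹ : ℝ) : ℂ) • v0 with hvdef
  have hvB : B *ᵥ v = v := by rw [hvdef, Matrix.mulVec_smul, hv0B]
  have hv0dot : star v0 ⬝ᵥ v0 = (r : ℂ) := by
    rw [hrdef]
    push_cast
    simp only [dotProduct, Pi.star_apply, RCLike.star_def,
      Complex.normSq_eq_conj_mul_self]
  have hvdot : star v ⬝ᵥ v = 1 := by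
    rw [hvdef, star_smul, smul_dotProduct, dotProduct_smul, hv0dot,
      smul_eq_mul, smul_eq_mul, RCLike.star_def, Complex.conj_ofReal]
    have hreal : ((Real.sqrt r)⁻¹ * ((Real.sqrt r)⁻¹ * r) : ℝ) = 1 := by
      rw [← mul_assoc, ← mul_inv, Real.mul_self_sqrt hrpos.le, inv_mul_cancel₀ hrpos.ne']
    exact_mod_cast hreal
  -- the orthonormal family of columns
  set w : ZMod N → ZMod N → ℂ := fun k => A ^ (k.val) *ᵥ v with hwdef
  set W : Matrix (ZMod N) (ZMod N) ℂ := Matrix.of (fun i k => w k i) with hWdef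
  have hwB : ∀ k : ZMod N, B *ᵥ w k = ω ^ (k.val) • w k := by
    intro k
    rw [hwdef]
    simp only
    rw [Matrix.mulVec_mulVec, weyl_pow hWeyl, ← hω, Matrix.smul_mulVec,
      ← Matrix.mulVec_mulVec, hvB]
  have hcastpow : ∀ m : ℕ, A ^ ((m : ZMod N)).val = A ^ m := by
    intro m
    rw [ZMod.val_natCast, pow_mod_eq hAN]
  have hwA : ∀ k : ZMod N, A *ᵥ w k = w (k + 1) := by
    intro k
    have hk1 : (k + 1 : ZMod N) = ((k.val + 1 : ℕ) : ZMod N) := by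
      push_cast
      rw [ZMod.natCast_rightInverse k]
    rw [hwdef]
    simp only
    rw [Matrix.mulVec_mulVec, ← pow_succ', hk1, hcastpow]
  -- orthonormality
  have hnorm : ∀ m : ℕ, star (A ^ m *ᵥ v) ⬝ᵥ (A ^ m *ᵥ v) = star v ⬝ᵥ v := by
    intro m
    induction m with
    | zero => simp
    | succ m ih =>
      rw [pow_succ', ← Matrix.mulVec_mulVec, inner_mulVec hA, ih]
  have hWW : Wᴴ * W = 1 := by
    ext j k
    rw [Matrix.mul_apply, Matrix.one_apply]
    have hsum : ∑ i, (Wᴴ) j i * W i k = star (w j) ⬝ᵥ w k := by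
      simp [hWdef, Matrix.conjTranspose_apply, dotProduct]
    rw [hsum]
    by_cases hjk : j = k
    · subst hjk
      rw [if_pos rfl, hwdef]
      simp only
      rw [hnorm, hvdot]
    · rw [if_neg hjk]
      set P : ℂ := star (w j) ⬝ᵥ w k with hPdef
      have h1 : P = (star (ω ^ j.val) * ω ^ k.val) * P := by
        conv_lhs => rw [hPdef, ← inner_mulVec hB (w j) (w k)]
        rw [hwB, hwB, star_smul, smul_dotProduct, dotProduct_smul,
          smul_eq_mul, smul_eq_mul, hPdef]
        ring
      have hq : star (ω ^ j.val) * ω ^ k.val ≠ 1 := by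
        intro hcontra
        have hstar : star (ω ^ j.val) = (ω ^ j.val)⁻¹ := by
          rw [star_pow, hconjω, inv_pow]
        rw [hstar, inv_mul_eq_one₀ (pow_ne_zero _ hω0)] at hcontra
        exact hjk (ZMod.val_injective N
          (hprim.pow_inj (ZMod.val_lt j) (ZMod.val_lt k) hcontra))
      have h2 : (1 - star (ω ^ j.val) * ω ^ k.val) * P = 0 := by
        rw [sub_mul, one_mul, ← h1, sub_self]
      rcases mul_eq_zero.mp h2 with h | h
      · exact absurd (sub_eq_zero.mp h).symm hq
      · exact h
  -- intertwining relations
  have hAW : A * W = W * shiftM N := by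
    ext i k
    have hl : (A * W) i k = (A *ᵥ w k) i := by
      rw [Matrix.mul_apply]
      rfl
    have hr : (W * shiftM N) i k = w (k + 1) i := by
      rw [Matrix.mul_apply]
      simp [hWdef, shiftM, mul_ite]
    rw [hl, hr, hwA]
  have hBW : B * W = W * twistM N := by
    ext i k
    have hl : (B * W) i k = (B *ᵥ w k) i := by
      rw [Matrix.mul_apply]
      rfl
    have hexp : Complex.exp (2 * Real.pi * Complex.I * (k.val : ℕ) / N) = ω ^ (k.val) := by
      rw [hω, ← Complex.exp_nat_mul]
      congr 1
      ring
    have hr : (W * twistM N) i k = ω ^ (k.val) * w k i := by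
      rw [Matrix.mul_apply]
      rw [Finset.sum_eq_single k (fun j _ hj => by simp [twistM, hj]) (by simp)]
      simp only [hWdef, Matrix.of_apply, twistM, if_pos rfl]
      rw [hexp]
      simp [mul_comm]
    rw [hl, hr, hwB]
    simp [Pi.smul_apply, smul_eq_mul]
  -- conclude
  have hWW' : W * Wᴴ = 1 := mul_eq_one_comm.mp hWW
  refine ⟨Wᴴ, ?_, ?_, ?_⟩
  · rw [Matrix.conjTranspose_conjTranspose]
    exact hWW'
  · rw [Matrix.conjTranspose_conjTranspose, mul_assoc, hAW, ← mul_assoc, hWW, one_mul]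
  · rw [Matrix.conjTranspose_conjTranspose, mul_assoc, hBW, ← mul_assoc, hWW, one_mul]
end

section
/- Let n ≥ 1 and let A : Matrix (Fin n) (Fin n) ℂ be nonzero. Then there exists α : ℂ with α ≠ 0 and (A.adjugate)ᴴ = α • A if and only if A is a nonzero scalar multiple of a unitary matrix, i.e. there exist c : ℂ with c ≠ 0 and a matrix U with Uᴴ * U = 1 such that A = c • U. (Equivalently: the vector in ℂⁿ⊗(ℂⁿ)* corresponding to A is an eigenvector of the determinant-gradient conjugation 𝔇 with nonzero eigenvalue iff it is maximally entangled.) -/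
open Matrix

open scoped ComplexOrder in
private lemma stmt_18_aux {n : ℕ} {A : Matrix (Fin n) (Fin n) ℂ} (h : A * Aᴴ = 0) : A = 0 :=
  Matrix.self_mul_conjTranspose_eq_zero.mp h

/-- A nonzero matrix `A` satisfies `(adj A)ᴴ = α • A` for some nonzero `α` (i.e. the
corresponding vector of `ℂⁿ ⊗ (ℂⁿ)*` is an eigenvector of the determinant-gradient map
with nonzero eigenvalue) iff `A` is a nonzero scalar multiple of a unitary (i.e. the
corresponding vector is maximally entangled). -/
theorem stmt_18 (n : ℕ) (hn : 1 ≤ n) (A : Matrix (Fin n) (Fin n) ℂ) (hA : A ≠ 0) :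
    (∃ α : ℂ, α ≠ 0 ∧ (A.adjugate)ᴴ = α • A) ↔
      (∃ c : ℂ, c ≠ 0 ∧ ∃ U : Matrix (Fin n) (Fin n) ℂ, Uᴴ * U = 1 ∧ A = c • U) := by
  constructor
  · rintro ⟨α, hα, h⟩
    have hsα : (starRingEnd ℂ) α ≠ 0 := by
      simpa using hα
    have hadj : A.adjugate = (starRingEnd ℂ) α • Aᴴ := by
      have := congrArg conjTranspose h
      simpa [conjTranspose_smul] using this
    have hmul : (starRingEnd ℂ) α • (A * Aᴴ) = A.det • (1 : Matrix (Fin n) (Fin n) ℂ) := by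
      rw [← Matrix.mul_smul, ← hadj, Matrix.mul_adjugate]
    have hdet : A.det ≠ 0 := by
      intro hd
      have h1 : (starRingEnd ℂ) α • (A * Aᴴ) = 0 := by rw [hmul, hd, zero_smul]
      have h2 : A * Aᴴ = 0 := by
        rcases smul_eq_zero.mp h1 with h | h
        · exact absurd h hsα
        · exact h
      exact hA (stmt_18_aux h2)
    set t : ℂ := A.det / (starRingEnd ℂ) α with ht
    have ht0 : t ≠ 0 := div_ne_zero hdet hsα
    have hAAt : A * Aᴴ = t • (1 : Matrix (Fin n) (Fin n) ℂ) := by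
      have := congrArg (fun M => ((starRingEnd ℂ) α)⁻¹ • M) hmul
      simpa [smul_smul, inv_mul_cancel₀ hsα, ht, div_eq_mul_inv, mul_comm] using this
    set i0 : Fin n := ⟨0, hn⟩
    set s : ℝ := ∑ j, Complex.normSq (A i0 j) with hs
    have hts : t = (s : ℂ) := by
      have h1 : (A * Aᴴ) i0 i0 = t := by
        rw [hAAt]; simp
      rw [← h1, Matrix.mul_apply]
      simp only [conjTranspose_apply, hs]
      push_cast
      exact Finset.sum_congr rfl fun j _ => Complex.mul_conj _
    have hs0 : 0 < s := by
      rcases (Finset.sum_nonneg fun j _ => Complex.normSq_nonneg (A i0 j)).lt_or_eq with h | h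
      · exact h
      · exact absurd (hts.trans (by rw [hs, ← h]; simp)) ht0
    set c : ℂ := (Real.sqrt s : ℂ) with hc
    have hc0 : c ≠ 0 := by
      simp [hc, Complex.ofReal_eq_zero, Real.sqrt_eq_zero', not_le, hs0, le_of_lt hs0]
      positivity
    have hcc : c * c = t := by
      rw [hts, hc]
      rw [← Complex.ofReal_mul, Real.mul_self_sqrt hs0.le]
    refine ⟨c, hc0, c⁻¹ • A, ?_, by rw [smul_smul, mul_inv_cancel₀ hc0, one_smul]⟩
    have hstarc : star c⁻¹ = c⁻¹ := by
      simp [hc]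
    rw [mul_eq_one_comm]
    rw [conjTranspose_smul, hstarc, Matrix.smul_mul, Matrix.mul_smul, hAAt,
      smul_smul, smul_smul]
    have h2 : c⁻¹ * c⁻¹ * t = 1 := by
      rw [← hcc]
      field_simp
    rw [h2, one_smul]
  · rintro ⟨c, hc, U, hU, rfl⟩
    have hU' : U * Uᴴ = 1 := mul_eq_one_comm.mp hU
    have hdetU : U.det ≠ 0 := by
      have := congrArg Matrix.det hU
      rw [Matrix.det_mul, Matrix.det_one] at this
      exact right_ne_zero_of_mul (this ▸ one_ne_zero)
    have hadjU : U.adjugate = U.det • Uᴴ := by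
      calc U.adjugate = U.adjugate * (U * Uᴴ) := by rw [hU', mul_one]
        _ = (U.adjugate * U) * Uᴴ := by rw [Matrix.mul_assoc]
        _ = U.det • Uᴴ := by rw [Matrix.adjugate_mul, Matrix.smul_mul, Matrix.one_mul]
    refine ⟨(starRingEnd ℂ) (c ^ (n - 1) * U.det) * c⁻¹, ?_, ?_⟩
    · apply mul_ne_zero
      · simpa using mul_ne_zero (pow_ne_zero _ hc) hdetU
      · exact inv_ne_zero hc
    · rw [Matrix.adjugate_smul, hadjU]
      simp only [Fintype.card_fin]
      rw [smul_smul, conjTranspose_smul, conjTranspose_conjTranspose]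
      rw [smul_smul]
      congr 1
      rw [starRingEnd_apply, mul_assoc, inv_mul_cancel₀ hc, mul_one]
end
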